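/- arXiv:2504.00301 — 5 statements merged into one kernel-verified Lean document; each statement's English description precedes it below -/
import Mathlib

section
/- Let (a,p) ∈ P^{2N}. Then for every k ≥ 0 and every t ≥ 0, y_k^−(t) ≤ y_{k+1}^−(t) and y_{k+1}^+(t) ≤ y_k^+(t). Moreover, the pointwise limits y_∞^±(t) := lim_{k→∞} y_k^±(t) exist for every t ≥ 0, and each of y_∞^− and y_∞^+ is a stationary trajectory: it is an increasing bijection of ℝ_{≥0} and, denoting its inverse by t_∞^±, it satisfies y_∞^±(t) = Σ_{j=1}^N p_j·(t − t_∞^±(a_j) + t_∞^±(a_1))_+ for all t ≥ 0. -/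
/-!
Write a trajectory as `t ↦ ∑ⱼ pⱼ (t - uⱼ)₊` with offsets `u₁ = 0 ≤ u₂ ≤ … ≤ u_N`.  On `[0, ∞)`
it is the maximum of the lines `qᵢ t - ∑_{l ≤ i} p_l u_l`, so its inverse is the minimum of
their inverses, and recurrence (R) becomes the map `u ↦ (t_u(aⱼ) - t_u(a₁))ⱼ` on offsets.
This map preserves the order "`v - u` is nondecreasing", which implies `u ≤ v` and hence
`y_v ≤ y_u`.  The offsets of `y₀⁻` are mapped below themselves in this order and the zero offsets
of `y₀⁺` above, so both orbits are monotone; they stay in `[0, aⱼ / q₁]`, hence converge, and by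
continuity of the map their limits are fixed points, i.e. offsets of stationary trajectories.
-/

open Filter Topology
open scoped Classical

noncomputable section

/-- The positive part `x₊ = max x 0` of a real number. -/
def pos' (x : ℝ) : ℝ := max x 0

/-- `qq p i = p 1 + ... + p i` (so `qq p 0 = 0`). -/
def qq (p : ℕ → ℝ) (i : ℕ) : ℝ := ∑ j ∈ Finset.Icc 1 i, p j

/-- `dpar a i = a i - a (i-1)`, with the convention `a 0 = 0`. -/
def dpar (a : ℕ → ℝ) (i : ℕ) : ℝ := if i = 1 then a 1 else a i - a (i - 1)

/-- `(a, p)` is a parameter tuple in `P^{2N}`: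
`0 < a 1 < a 2 < ... < a N` and `p 1, ..., p N > 0`. -/
def IsParam (N : ℕ) (a p : ℕ → ℝ) : Prop :=
  0 < a 1 ∧ (∀ i, 1 ≤ i → i < N → a i < a (i + 1)) ∧ (∀ i, 1 ≤ i → i ≤ N → 0 < p i)

/-- `s` is a stationary tuple for the parameters `(a, p)`:
`0 < s 1 < ... < s N` and `a i = ∑_{j=1}^N p j * (s i - s j + s 1)₊` for `1 ≤ i ≤ N`. -/
def IsStationaryTuple (N : ℕ) (a p s : ℕ → ℝ) : Prop :=
  0 < s 1 ∧ (∀ i, 1 ≤ i → i < N → s i < s (i + 1)) ∧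
  ∀ i, 1 ≤ i → i ≤ N → a i = ∑ j ∈ Finset.Icc 1 N, p j * pos' (s i - s j + s 1)

/-- The inverse of (the restriction to `[0, ∞)` of) a function `y : ℝ → ℝ`. -/
def tinv (y : ℝ → ℝ) (x : ℝ) : ℝ := Function.invFunOn y (Set.Ici 0) x

/-- The right derivative of `y` at `t` (the derivative of `y` at `t` within `[t, ∞)`). -/
def rD (y : ℝ → ℝ) (t : ℝ) : ℝ := derivWithin y (Set.Ici t) t

/-- The sequence `(y k)` satisfies recurrence (R).  The condition on the initial function `y 0`
(continuous, piecewise linear with at most `N` points of non-differentiability, vanishing at `0`,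
with non-decreasing right derivative taking values in `{q 1, ..., q N}`) is encoded through its
canonical representation: such functions are exactly those of the form
`t ↦ ∑_{j=1}^N p j * (t - c j)₊` with `c` non-negative, non-decreasing and `c 1 = 0`. -/
def SatisfiesR (N : ℕ) (a p : ℕ → ℝ) (y : ℕ → ℝ → ℝ) : Prop :=
  (∃ c : ℕ → ℝ, c 1 = 0 ∧ (∀ j, 1 ≤ j → j ≤ N → 0 ≤ c j) ∧
      (∀ j, 1 ≤ j → j < N → c j ≤ c (j + 1)) ∧
      ∀ t : ℝ, 0 ≤ t → y 0 t = ∑ j ∈ Finset.Icc 1 N, p j * pos' (t - c j)) ∧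
  ∀ k : ℕ, ∀ t : ℝ, 0 ≤ t →
    y (k + 1) t = ∑ j ∈ Finset.Icc 1 N, p j * pos' (t - tinv (y k) (a j) + tinv (y k) (a 1))

/-- The breakpoints `c j` of the lower bounding trajectory `y₀⁻`:
`c 1 = 0` and `c j = d 1 / q 1 + ∑_{l=2}^j d l / q (l-1)` for `j ≥ 2`. -/
def cminus (a p : ℕ → ℝ) (j : ℕ) : ℝ :=
  if j ≤ 1 then 0
  else a 1 / qq p 1 + ∑ l ∈ Finset.Icc 2 j, (a l - a (l - 1)) / qq p (l - 1)

/-- The lower bounding initial trajectory `y₀⁻`. -/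
def yminus0 (N : ℕ) (a p : ℕ → ℝ) : ℝ → ℝ :=
  fun t => ∑ j ∈ Finset.Icc 1 N, p j * pos' (t - cminus a p j)

/-- The upper bounding initial trajectory `y₀⁺ : t ↦ q N * t`. -/
def yplus0 (N : ℕ) (p : ℕ → ℝ) : ℝ → ℝ := fun t => qq p N * t

/-- The sequence satisfying recurrence (R) with prescribed initial term `y0`. -/
def iterR (N : ℕ) (a p : ℕ → ℝ) (y0 : ℝ → ℝ) : ℕ → ℝ → ℝ
  | 0 => y0
  | k + 1 => fun t =>
      ∑ j ∈ Finset.Icc 1 N,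
        p j * pos' (t - tinv (iterR N a p y0 k) (a j) + tinv (iterR N a p y0 k) (a 1))

/-- `y` is a stationary trajectory: an increasing bijection of `[0,∞)` satisfying the
fixed-point equation of recurrence (R). -/
def IsStatTraj (N : ℕ) (a p : ℕ → ℝ) (y : ℝ → ℝ) : Prop :=
  StrictMonoOn y (Set.Ici 0) ∧ Set.BijOn y (Set.Ici 0) (Set.Ici 0) ∧
  ∀ t : ℝ, 0 ≤ t → y t = ∑ j ∈ Finset.Icc 1 N, p j * pos' (t - tinv y (a j) + tinv y (a 1))

/-- `E_N`: the set of pairs `(i, j)` with `1 ≤ i < j ≤ N`. -/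
def ENfin (N : ℕ) : Finset (ℕ × ℕ) :=
  (Finset.Icc 1 N ×ˢ Finset.Icc 1 N).filter fun e => e.1 < e.2

/-- `Nested e e'` means `e ≼_E e'`, i.e. `e` is nested in `e'`. -/
def Nested (e e' : ℕ × ℕ) : Prop := e'.1 ≤ e.1 ∧ e.1 < e.2 ∧ e.2 ≤ e'.2

/-- `E` is the edge set of a downward closed graph on `{1, ..., N}`. -/
def IsDCGraph (N : ℕ) (E : Finset (ℕ × ℕ)) : Prop :=
  E ⊆ ENfin N ∧ ∀ e ∈ E, ∀ e' : ℕ × ℕ, Nested e' e → e' ∈ E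

/-- `bG E i` is the greatest `j > i` with `(i, j) ∈ E`, and `i` if there is no such `j`;
by convention `bG E 0 = 1`. -/
def bG (E : Finset (ℕ × ℕ)) (i : ℕ) : ℕ :=
  if i = 0 then 1 else max i ((E.filter fun e => e.1 = i).sup fun e => e.2)

/-- `m(G)`: the maximal elements of `E` for `≼_E`. -/
def maxE (E : Finset (ℕ × ℕ)) : Finset (ℕ × ℕ) :=
  E.filter fun e => ∀ e' ∈ E, Nested e e' → e' = e

/-- `M(G)`: the minimal elements of `E_N \ E` for `≼_E`. -/
def minNE (N : ℕ) (E : Finset (ℕ × ℕ)) : Finset (ℕ × ℕ) :=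
  (ENfin N \ E).filter fun e => ∀ e' ∈ ENfin N \ E, Nested e' e → e' = e

/-- The map `T(G) : ℝ^N → ℝ^N`. -/
def TG (a p : ℕ → ℝ) (E : Finset (ℕ × ℕ)) (s : ℕ → ℝ) (i : ℕ) : ℝ :=
  (1 / qq p (bG E i)) * (a i + ∑ j ∈ Finset.Icc 1 (bG E i), p j * (s j - s 1))

/-- The product of `γ` over the consecutive pairs (edges) of a list of vertices. -/
def pathProd (γ : ℕ → ℕ → ℝ) (l : List ℕ) : ℝ := (List.zipWith γ l l.tail).prod

/-- `Γ i j`: the sum, over all directed paths from `i` to `j` using edges of `E`, of the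
product of `γ` over the edges of the path.  Since all edges of a DC graph increase, a directed
path from `i` to `j` is identified with the set `S ⊆ (i, j)` of its intermediate vertices,
subject to consecutive vertices being joined by edges of `E`. -/
def GammaPath (E : Finset (ℕ × ℕ)) (γ : ℕ → ℕ → ℝ) (i j : ℕ) : ℝ :=
  if i = j then 1
  else if i < j then
    ∑ S ∈ (Finset.Ioo i j).powerset,
      if List.Chain' (fun u v => (u, v) ∈ E) (Finset.sort (insert i (insert j S)) (· ≤ ·))
      then pathProd γ (Finset.sort (insert i (insert j S)) (· ≤ ·)) else 0
  else 0

/-- The edge weight `γ^G_{i,j}`. -/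
def gammaG (p : ℕ → ℝ) (E : Finset (ℕ × ℕ)) (i j : ℕ) : ℝ :=
  (qq p (bG E i) - qq p (max (j - 1) (bG E (i - 1)))) / qq p (bG E (i - 1))

/-- `Γ^G_{i,j}`. -/
def GammaG (p : ℕ → ℝ) (E : Finset (ℕ × ℕ)) (i j : ℕ) : ℝ := GammaPath E (gammaG p E) i j

/-- `z_1^G (a, p)`. -/
def z1G (N : ℕ) (a p : ℕ → ℝ) (E : Finset (ℕ × ℕ)) : ℝ :=
  (∑ j ∈ Finset.Icc 1 N, GammaG p E 1 j * dpar a j / qq p (bG E (j - 1))) /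
  (1 + ∑ j ∈ Finset.Icc 1 N,
      GammaG p E 1 j * (qq p (bG E j) - qq p (bG E (j - 1))) / qq p (bG E (j - 1)))

/-- `z_i^G (a, p)`. -/
def zG (N : ℕ) (a p : ℕ → ℝ) (E : Finset (ℕ × ℕ)) (i : ℕ) : ℝ :=
  if i = 1 then z1G N a p E
  else
    (∑ j ∈ Finset.Icc i N, GammaG p E i j * dpar a j / qq p (bG E (j - 1))) -
      z1G N a p E *
        ∑ j ∈ Finset.Icc i N,
          GammaG p E i j * (qq p (bG E j) - qq p (bG E (j - 1))) / qq p (bG E (j - 1))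

/-- `Z^G_{i,j} (a, p) = z_{i+1}^G + ... + z_j^G`. -/
def ZG (N : ℕ) (a p : ℕ → ℝ) (E : Finset (ℕ × ℕ)) (i j : ℕ) : ℝ :=
  ∑ l ∈ Finset.Icc (i + 1) j, zG N a p E l

/-- The DC graph `Gr(a, p)` read off from the stationary tuple `s = s(a, p)`: its edges are
the pairs `(i, j) ∈ E_N` with `s 1 > s j - s i`. -/
def GrEdges (N : ℕ) (s : ℕ → ℝ) : Finset (ℕ × ℕ) :=
  (ENfin N).filter fun e => s e.2 - s e.1 < s 1

/-- `ζ` solves the linear system `S^G (a, p)`. -/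
def SolvesS (N : ℕ) (a p : ℕ → ℝ) (E : Finset (ℕ × ℕ)) (ζ : ℕ → ℝ) : Prop :=
  ∀ i, 1 ≤ i → i ≤ N →
    a i = ∑ j ∈ Finset.Icc 1 (bG E i),
      p j * ((∑ l ∈ Finset.Icc 1 i, ζ l) - (∑ l ∈ Finset.Icc 1 j, ζ l) + ζ 1)

/-- `P^{2N}`, viewed as a (cylinder) subset of the space of pairs of real sequences; only the
coordinates `a 1, ..., a N, p 1, ..., p N` are constrained. -/
def Pset (N : ℕ) : Set ((ℕ → ℝ) × (ℕ → ℝ)) := {ap | IsParam N ap.1 ap.2}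

/-- The region `P_G = {(a, p) ∈ P^{2N} : Gr(a, p) = G}`. -/
def PGset (N : ℕ) (E : Finset (ℕ × ℕ)) : Set ((ℕ → ℝ) × (ℕ → ℝ)) :=
  {ap | IsParam N ap.1 ap.2 ∧ ∃ s : ℕ → ℝ, IsStationaryTuple N ap.1 ap.2 s ∧ GrEdges N s = E}

/-- The boundary of `P_G` relative to `P^{2N}`.  Since `P^{2N}` is open, the closure of `P_G`
relative to `P^{2N}` is `closure (PGset N E) ∩ Pset N` and its relative interior is
`interior (PGset N E)`. -/
def relBoundary (N : ℕ) (E : Finset (ℕ × ℕ)) : Set ((ℕ → ℝ) × (ℕ → ℝ)) :=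
  (closure (PGset N E) ∩ Pset N) \ interior (PGset N E)

/-- The trajectory `y^{(m)}` built from a tuple `s`:
`t ↦ ∑_{j=1}^N p j * (t - s j + s 1)₊`. -/
def trajOfS (N : ℕ) (p s : ℕ → ℝ) : ℝ → ℝ :=
  fun t => ∑ j ∈ Finset.Icc 1 N, p j * pos' (t - s j + s 1)

/-- The DC graph `G^{(m)}` associated with a tuple `s`: its edges are the `(i, j) ∈ E_N` with
`t^{(m)} (a i) - s j + s 1 > 0`, where `t^{(m)}` is the inverse of `trajOfS N p s`. -/
def GrFromS (N : ℕ) (a p s : ℕ → ℝ) : Finset (ℕ × ℕ) :=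
  (ENfin N).filter fun e => 0 < tinv (trajOfS N p s) (a e.1) - s e.2 + s 1

end

open Finset

namespace RecurrenceR

noncomputable section

/-- For `t ≥ 0`, `traj N p u t = max_i (qq p i * t - wsum p u i)`; `u` plays the role of the
offsets `t_k(a_j) - t_k(a_1)` of the paper. -/
def traj (N : ℕ) (p u : ℕ → ℝ) (t : ℝ) : ℝ := ∑ j ∈ Icc 1 N, p j * pos' (t - u j)

def wsum (p u : ℕ → ℝ) (i : ℕ) : ℝ := ∑ l ∈ Icc 1 i, p l * u l

/-- The inverse of `traj N p u` on `[0, ∞)`: the minimum of the inverses of the lines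
`t ↦ qq p i * t - wsum p u i`.  The index `1` is inserted only to make the index set
nonempty without assuming `1 ≤ N`. -/
def trajInv (N : ℕ) (p u : ℕ → ℝ) (x : ℝ) : ℝ :=
  (insert 1 (Icc 1 N)).inf' (insert_nonempty _ _) fun i => (x + wsum p u i) / qq p i

def IsOffset (N : ℕ) (u : ℕ → ℝ) : Prop := u 1 = 0 ∧ MonotoneOn u (Set.Icc 1 N)

end

variable {N : ℕ} {p u v : ℕ → ℝ}

lemma IsOffset.nonneg (hu : IsOffset N u) {j : ℕ} (hj : j ∈ Icc 1 N) : 0 ≤ u j := by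
  obtain ⟨h1, hjN⟩ := mem_Icc.1 hj
  simpa [hu.1] using hu.2 ⟨le_rfl, h1.trans hjN⟩ ⟨h1, hjN⟩ h1

lemma qq_pos (hp : ∀ i ∈ Icc 1 N, 0 < p i) {i : ℕ} (h1 : 1 ≤ i) (hi : i ≤ N) :
    0 < qq p i :=
  sum_pos (fun _ hl => hp _ (Icc_subset_Icc_right hi hl)) ⟨1, mem_Icc.2 ⟨le_rfl, h1⟩⟩

lemma qq_le_qq (hp : ∀ i ∈ Icc 1 N, 0 < p i) {i j : ℕ} (hij : i ≤ j) (hj : j ≤ N) :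
    qq p i ≤ qq p j :=
  sum_le_sum_of_subset_of_nonneg (Icc_subset_Icc_right hij)
    fun _ hl _ => (hp _ (Icc_subset_Icc_right hj hl)).le

lemma wsum_nonneg (hp : ∀ i ∈ Icc 1 N, 0 < p i) (hu : IsOffset N u) {i : ℕ} (hi : i ≤ N) :
    0 ≤ wsum p u i :=
  sum_nonneg fun _ hl =>
    mul_nonneg (hp _ (Icc_subset_Icc_right hi hl)).le (hu.nonneg (Icc_subset_Icc_right hi hl))

lemma wsum_sub (p u v : ℕ → ℝ) (i : ℕ) : wsum p v i - wsum p u i = wsum p (v - u) i := by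
  simp only [wsum, ← sum_sub_distrib, Pi.sub_apply, mul_sub]

lemma sum_Icc_add_sum_Ioc (f : ℕ → ℝ) {i j : ℕ} (hji : j ≤ i) :
    ∑ l ∈ Icc 1 j, f l + ∑ l ∈ Ioc j i, f l = ∑ l ∈ Icc 1 i, f l := by
  have hI : ∀ m, Icc 1 m = Ioc 0 m := Icc_add_one_left_eq_Ioc 0
  rw [hI, hI]
  exact sum_Ioc_consecutive f (Nat.zero_le j) hji

lemma traj_nonneg (hp : ∀ i ∈ Icc 1 N, 0 < p i) (u : ℕ → ℝ) (t : ℝ) :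
    0 ≤ traj N p u t :=
  sum_nonneg fun _ hl => mul_nonneg (hp _ hl).le (le_max_right _ _)

lemma traj_le_traj_of_le (hp : ∀ i ∈ Icc 1 N, 0 < p i) (huv : ∀ j ∈ Icc 1 N, u j ≤ v j)
    (t : ℝ) :    traj N p v t ≤ traj N p u t :=
  sum_le_sum fun j hj => mul_le_mul_of_nonneg_left
    (max_le_max (by linarith [huv j hj]) le_rfl) (hp j hj).le

lemma traj_congr (huv : ∀ j ∈ Icc 1 N, u j = v j) : traj N p u = traj N p v := by
  funext t
  exact sum_congr rfl fun j hj => by rw [huv j hj]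

lemma qq_mul_sub_wsum (p u : ℕ → ℝ) (i : ℕ) (t : ℝ) :
    qq p i * t - wsum p u i = ∑ l ∈ Icc 1 i, p l * (t - u l) := by
  rw [qq, wsum, sum_mul, ← sum_sub_distrib]
  exact sum_congr rfl fun l _ => by ring

lemma qq_mul_sub_wsum_le_traj (hp : ∀ i ∈ Icc 1 N, 0 < p i) (u : ℕ → ℝ) {i : ℕ}
    (hi : i ≤ N) (t : ℝ) : qq p i * t - wsum p u i ≤ traj N p u t := by
  rw [qq_mul_sub_wsum]
  calc ∑ l ∈ Icc 1 i, p l * (t - u l) ≤ ∑ l ∈ Icc 1 i, p l * pos' (t - u l) :=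
        sum_le_sum fun l hl =>
          mul_le_mul_of_nonneg_left (le_max_left _ _) (hp l (Icc_subset_Icc_right hi hl)).le
    _ ≤ traj N p u t :=
        sum_le_sum_of_subset_of_nonneg (Icc_subset_Icc_right hi)
          fun l hl _ => mul_nonneg (hp l hl).le (le_max_right _ _)

lemma traj_eq_of_le_of_le {i : ℕ} (hiN : i ≤ N) {t : ℝ}
    (hbelow : ∀ l ∈ Icc 1 i, u l ≤ t) (habove : ∀ l ∈ Ioc i N, t ≤ u l) :
    traj N p u t = qq p i * t - wsum p u i := by
  have hlow : ∀ l ∈ Icc 1 i, p l * pos' (t - u l) = p l * (t - u l) := fun l hl => by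
    rw [pos', max_eq_left (sub_nonneg.2 (hbelow l hl))]
  have hhigh : ∀ l ∈ Ioc i N, p l * pos' (t - u l) = 0 := fun l hl => by
    rw [pos', max_eq_right (sub_nonpos.2 (habove l hl)), mul_zero]
  rw [traj, ← sum_Icc_add_sum_Ioc _ hiN, sum_congr rfl hlow, sum_congr rfl hhigh, sum_const_zero,
    add_zero, qq_mul_sub_wsum]

lemma traj_offset_eq (hu : MonotoneOn u (Set.Icc 1 N)) {j : ℕ} (hj : j ∈ Icc 1 N) :
    traj N p u (u j) = qq p j * u j - wsum p u j := by
  obtain ⟨hj1, hjN⟩ := mem_Icc.1 hj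
  refine traj_eq_of_le_of_le hjN (fun l hl => ?_) (fun l hl => ?_)
  · obtain ⟨hl1, hlj⟩ := mem_Icc.1 hl
    exact hu ⟨hl1, hlj.trans hjN⟩ ⟨hj1, hjN⟩ hlj
  · obtain ⟨hjl, hlN⟩ := mem_Ioc.1 hl
    exact hu ⟨hj1, hjN⟩ ⟨hj1.trans hjl.le, hlN⟩ hjl.le

lemma exists_traj_eq (hN : 1 ≤ N) (hu : IsOffset N u) {t : ℝ} (ht : 0 ≤ t) :
    ∃ i ∈ Icc 1 N, traj N p u t = qq p i * t - wsum p u i := by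
  set F := (Icc 1 N).filter (fun l => u l ≤ t)
  have hF : F.Nonempty := ⟨1, mem_filter.2 ⟨mem_Icc.2 ⟨le_rfl, hN⟩, hu.1 ▸ ht⟩⟩
  obtain ⟨hiI, hit⟩ := mem_filter.1 (F.max'_mem hF)
  obtain ⟨hi1, hiN⟩ := mem_Icc.1 hiI
  refine ⟨F.max' hF, hiI, traj_eq_of_le_of_le hiN (fun l hl => ?_) (fun l hl => ?_)⟩
  · obtain ⟨hl1, hli⟩ := mem_Icc.1 hl
    exact (hu.2 ⟨hl1, hli.trans hiN⟩ ⟨hi1, hiN⟩ hli).trans hit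
  · obtain ⟨hil, hlN⟩ := mem_Ioc.1 hl
    by_contra! hlt
    have hlF : l ∈ F := mem_filter.2 ⟨mem_Icc.2 ⟨hi1.trans hil.le, hlN⟩, hlt.le⟩
    exact (F.le_max' l hlF).not_gt hil

lemma trajInv_le (u : ℕ → ℝ) (x : ℝ) {i : ℕ} (hi : i ∈ Icc 1 N) :
    trajInv N p u x ≤ (x + wsum p u i) / qq p i :=
  inf'_le _ (mem_insert_of_mem hi)

lemma exists_trajInv_eq (hN : 1 ≤ N) (u : ℕ → ℝ) (x : ℝ) :
    ∃ i ∈ Icc 1 N, trajInv N p u x = (x + wsum p u i) / qq p i := by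
  obtain ⟨i, hi, heq⟩ := exists_mem_eq_inf' (insert_nonempty 1 (Icc 1 N))
    fun i => (x + wsum p u i) / qq p i
  rw [insert_eq_of_mem (mem_Icc.2 ⟨le_rfl, hN⟩)] at hi
  exact ⟨i, hi, heq⟩

lemma trajInv_nonneg (hN : 1 ≤ N) (hp : ∀ i ∈ Icc 1 N, 0 < p i) (hu : IsOffset N u) {x : ℝ}
    (hx : 0 ≤ x) : 0 ≤ trajInv N p u x := by
  obtain ⟨i, hi, heq⟩ := exists_trajInv_eq (p := p) hN u x
  obtain ⟨h1, hiN⟩ := mem_Icc.1 hi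
  rw [heq]
  exact div_nonneg (add_nonneg hx (wsum_nonneg hp hu hiN)) (qq_pos hp h1 hiN).le

lemma monotone_trajInv (hN : 1 ≤ N) (hp : ∀ i ∈ Icc 1 N, 0 < p i) (u : ℕ → ℝ) :
    Monotone (trajInv N p u) := fun x x' hxx => by
  obtain ⟨i, hi, heq⟩ := exists_trajInv_eq (p := p) hN u x'
  have := qq_pos hp (mem_Icc.1 hi).1 (mem_Icc.1 hi).2
  rw [heq]
  exact (trajInv_le u x hi).trans (by gcongr)

lemma traj_trajInv (hN : 1 ≤ N) (hp : ∀ i ∈ Icc 1 N, 0 < p i) (hu : IsOffset N u) {x : ℝ}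
    (hx : 0 ≤ x) : traj N p u (trajInv N p u x) = x := by
  obtain ⟨i, hi, hti⟩ := exists_traj_eq (p := p) hN hu (trajInv_nonneg hN hp hu hx)
  obtain ⟨j, hj, htj⟩ := exists_trajInv_eq (p := p) hN u x
  have hqi := qq_pos hp (mem_Icc.1 hi).1 (mem_Icc.1 hi).2
  have hqj := qq_pos hp (mem_Icc.1 hj).1 (mem_Icc.1 hj).2
  apply le_antisymm
  · have h := mul_le_mul_of_nonneg_left (trajInv_le (p := p) u x hi) hqi.le
    rw [mul_div_cancel₀ _ hqi.ne'] at h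
    linarith
  · have h := qq_mul_sub_wsum_le_traj hp u (mem_Icc.1 hj).2 (trajInv N p u x)
    rw [htj, mul_div_cancel₀ _ hqj.ne', add_sub_cancel_right] at h
    rwa [htj]

lemma strictMonoOn_traj (hN : 1 ≤ N) (hp : ∀ i ∈ Icc 1 N, 0 < p i) (hu : IsOffset N u) :
    StrictMonoOn (traj N p u) (Set.Ici 0) := fun s hs t _ hst => by
  have h1 : 1 ∈ Icc 1 N := mem_Icc.2 ⟨le_rfl, hN⟩
  refine sum_lt_sum (fun l hl => mul_le_mul_of_nonneg_left
    (max_le_max (by linarith) le_rfl) (hp l hl).le) ⟨1, h1, ?_⟩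
  rw [hu.1, sub_zero, sub_zero, pos', pos', max_eq_left (Set.mem_Ici.1 hs),
    max_eq_left (by linarith [Set.mem_Ici.1 hs])]
  exact mul_lt_mul_of_pos_left hst (hp 1 h1)

lemma tinv_eq_trajInv (hN : 1 ≤ N) (hp : ∀ i ∈ Icc 1 N, 0 < p i) (hu : IsOffset N u)
    {y : ℝ → ℝ} (hy : Set.EqOn y (traj N p u) (Set.Ici 0)) {x : ℝ} (hx : 0 ≤ x) :
    tinv y x = trajInv N p u x := by
  have ht := trajInv_nonneg hN hp hu hx
  have hinj := ((strictMonoOn_traj hN hp hu).congr hy.symm).injOn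
  simpa only [tinv, hy ht, traj_trajInv hN hp hu hx] using hinj.leftInvOn_invFunOn ht

lemma trajInv_eq_of_traj_eq (hN : 1 ≤ N) (hp : ∀ i ∈ Icc 1 N, 0 < p i) (hu : IsOffset N u)
    {t x : ℝ} (ht : 0 ≤ t) (h : traj N p u t = x) : trajInv N p u x = t := by
  have hx : 0 ≤ x := h ▸ traj_nonneg hp u t
  exact (strictMonoOn_traj hN hp hu).injOn (trajInv_nonneg hN hp hu hx) ht
    (by rw [traj_trajInv hN hp hu hx, h])

lemma tendsto_traj {w : ℕ → ℕ → ℝ} {L : ℕ → ℝ}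
    (hw : ∀ j ∈ Icc 1 N, Tendsto (fun k => w k j) atTop (𝓝 (L j))) (t : ℝ) :
    Tendsto (fun k => traj N p (w k) t) atTop (𝓝 (traj N p L t)) := by
  simp only [traj, pos']
  exact tendsto_finsetSum _ fun j hj =>
    ((tendsto_const_nhds.sub (hw j hj)).max tendsto_const_nhds).const_mul (p j)

lemma tendsto_trajInv (hN : 1 ≤ N) {w : ℕ → ℕ → ℝ} {L : ℕ → ℝ}
    (hw : ∀ j ∈ Icc 1 N, Tendsto (fun k => w k j) atTop (𝓝 (L j))) (x : ℝ) :
    Tendsto (fun k => trajInv N p (w k) x) atTop (𝓝 (trajInv N p L x)) := by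
  refine Tendsto.finset_inf'_nhds_apply _ fun i hi => ?_
  rw [insert_eq_of_mem (mem_Icc.2 ⟨le_rfl, hN⟩)] at hi
  refine ((tendsto_finsetSum _ fun l hl => ?_).const_add x).div_const _
  exact (hw l (Icc_subset_Icc_right (mem_Icc.1 hi).2 hl)).const_mul (p l)

/-- The `p`-weighted averages of a monotone `w` over `[1, j]` increase with `j`. -/
lemma wsum_mul_qq_le (hp : ∀ i ∈ Icc 1 N, 0 < p i) {w : ℕ → ℝ}
    (hw : MonotoneOn w (Set.Icc 1 N)) {i j : ℕ} (hj : 1 ≤ j) (hji : j ≤ i) (hi : i ≤ N) :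
    wsum p w j * qq p i ≤ wsum p w i * qq p j := by
  have hpos : ∀ l ∈ Icc 1 i, 0 ≤ p l := fun l hl => (hp l (Icc_subset_Icc_right hi hl)).le
  have hbelow : wsum p w j ≤ w j * qq p j := by
    rw [wsum, qq, mul_sum]
    refine sum_le_sum fun l hl => ?_
    obtain ⟨hl1, hlj⟩ := mem_Icc.1 hl
    rw [mul_comm (w j)]
    exact mul_le_mul_of_nonneg_left (hw ⟨hl1, by omega⟩ ⟨hj, by omega⟩ hlj)
      (hpos l (Icc_subset_Icc_right hji hl))
  have habove : w j * (qq p i - qq p j) ≤ wsum p w i - wsum p w j := by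
    rw [qq, qq, wsum, wsum, ← sum_Icc_add_sum_Ioc _ hji, ← sum_Icc_add_sum_Ioc _ hji,
      add_sub_cancel_left, add_sub_cancel_left, mul_sum]
    refine sum_le_sum fun l hl => ?_
    obtain ⟨hjl, hli⟩ := mem_Ioc.1 hl
    rw [mul_comm (w j)]
    exact mul_le_mul_of_nonneg_left (hw ⟨hj, by omega⟩ ⟨by omega, by omega⟩ hjl.le)
      (hpos l (mem_Icc.2 ⟨by omega, hli⟩))
  have hqq : 0 ≤ qq p i - qq p j := sub_nonneg.2 (qq_le_qq hp hji hi)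
  have hqj : 0 ≤ qq p j := (qq_pos hp hj (hji.trans hi)).le
  calc wsum p w j * qq p i = wsum p w j * qq p j + wsum p w j * (qq p i - qq p j) := by ring
    _ ≤ wsum p w j * qq p j + qq p j * (w j * (qq p i - qq p j)) := by
        nlinarith [mul_le_mul_of_nonneg_right hbelow hqq]
    _ ≤ wsum p w j * qq p j + qq p j * (wsum p w i - wsum p w j) := by gcongr
    _ = wsum p w i * qq p j := by ring

/-- Let `i` minimize `trajInv v x'` and `j` minimize `trajInv u x`.  Bound `trajInv u x'` by the
line of index `max i j` and `trajInv v x` by that of index `min i j`: for `i ≤ j` the slopes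
`1 / qq p _` compare, for `j ≤ i` the averages of `v - u` do (`wsum_mul_qq_le`). -/
lemma trajInv_sub_le_trajInv_sub (hN : 1 ≤ N) (hp : ∀ i ∈ Icc 1 N, 0 < p i)
    (huv : MonotoneOn (v - u) (Set.Icc 1 N)) {x x' : ℝ} (hxx : x ≤ x') :
    trajInv N p u x' - trajInv N p u x ≤ trajInv N p v x' - trajInv N p v x := by
  obtain ⟨i, hi, hvi⟩ := exists_trajInv_eq (p := p) hN v x'
  obtain ⟨j, hj, huj⟩ := exists_trajInv_eq (p := p) hN u x
  obtain ⟨hi1, hiN⟩ := mem_Icc.1 hi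
  obtain ⟨hj1, hjN⟩ := mem_Icc.1 hj
  have hqi := qq_pos hp hi1 hiN
  have hqj := qq_pos hp hj1 hjN
  rw [sub_le_sub_iff, hvi, huj]
  rcases le_total i j with hij | hji
  · have hslope : (x' - x) / qq p j ≤ (x' - x) / qq p i :=
      div_le_div_of_nonneg_left (by linarith) hqi (qq_le_qq hp hij hjN)
    have e1 : (x' + wsum p u j) / qq p j = (x + wsum p u j) / qq p j + (x' - x) / qq p j := by
      ring
    have e2 : (x' + wsum p v i) / qq p i = (x + wsum p v i) / qq p i + (x' - x) / qq p i := by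
      ring
    linarith [trajInv_le (p := p) u x' hj, trajInv_le (p := p) v x hi]
  · have havg : (wsum p v j - wsum p u j) / qq p j ≤ (wsum p v i - wsum p u i) / qq p i := by
      rw [wsum_sub, wsum_sub, div_le_div_iff₀ hqj hqi]
      exact wsum_mul_qq_le hp huv hj1 hji hiN
    have e1 : (x' + wsum p v i) / qq p i
        = (x' + wsum p u i) / qq p i + (wsum p v i - wsum p u i) / qq p i := by ring
    have e2 : (x + wsum p v j) / qq p j
        = (x + wsum p u j) / qq p j + (wsum p v j - wsum p u j) / qq p j := by ring
    linarith [trajInv_le (p := p) u x' hi, trajInv_le (p := p) v x hj]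

noncomputable section

def nextOffset (N : ℕ) (a p u : ℕ → ℝ) (j : ℕ) : ℝ :=
  trajInv N p u (a j) - trajInv N p u (a 1)

def recStep (N : ℕ) (a p : ℕ → ℝ) (y : ℝ → ℝ) (t : ℝ) : ℝ :=
  ∑ j ∈ Icc 1 N, p j * pos' (t - tinv y (a j) + tinv y (a 1))

end

variable {a L : ℕ → ℝ}

lemma _root_.IsParam.pos (hap : IsParam N a p) : ∀ i ∈ Icc 1 N, 0 < p i :=
  fun i hi => hap.2.2 i (mem_Icc.1 hi).1 (mem_Icc.1 hi).2

lemma _root_.IsParam.monotoneOn (hap : IsParam N a p) : MonotoneOn a (Set.Icc 1 N) :=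
  monotoneOn_of_le_add_one Set.ordConnected_Icc fun i _ hi hi' =>
    (hap.2.1 i hi.1 (Nat.lt_of_succ_le hi'.2)).le

lemma _root_.IsParam.nonneg (hap : IsParam N a p) {j : ℕ} (hj : j ∈ Icc 1 N) : 0 ≤ a j := by
  obtain ⟨hj1, hjN⟩ := mem_Icc.1 hj
  exact hap.1.le.trans (hap.monotoneOn ⟨le_rfl, hj1.trans hjN⟩ ⟨hj1, hjN⟩ hj1)

lemma isOffset_nextOffset (hN : 1 ≤ N) (hap : IsParam N a p) (u : ℕ → ℝ) :
    IsOffset N (nextOffset N a p u) :=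
  ⟨sub_self _, fun _ hi _ hj hij =>
    sub_le_sub_right (monotone_trajInv hN hap.pos u (hap.monotoneOn hi hj hij)) _⟩

lemma isOffset_iterate_nextOffset (hN : 1 ≤ N) (hap : IsParam N a p) (hu : IsOffset N u)
    (k : ℕ) : IsOffset N ((nextOffset N a p)^[k] u) := by
  cases k with
  | zero => exact hu
  | succ k => rw [Function.iterate_succ_apply']; exact isOffset_nextOffset hN hap _

lemma nextOffset_le (hN : 1 ≤ N) (hap : IsParam N a p) (hu : IsOffset N u) (j : ℕ) :
    nextOffset N a p u j ≤ a j / qq p 1 := by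
  have h := trajInv_le (p := p) u (a j) (mem_Icc.2 ⟨le_rfl, hN⟩)
  rw [wsum, Icc_self, sum_singleton, hu.1, mul_zero, add_zero] at h
  rw [nextOffset]
  linarith [trajInv_nonneg hN hap.pos hu hap.1.le]

lemma monotoneOn_nextOffset_sub (hN : 1 ≤ N) (hap : IsParam N a p)
    (huv : MonotoneOn (v - u) (Set.Icc 1 N)) :
    MonotoneOn (nextOffset N a p v - nextOffset N a p u) (Set.Icc 1 N) := fun _ hi _ hj hij => by
  have := trajInv_sub_le_trajInv_sub hN hap.pos huv (hap.monotoneOn hi hj hij)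
  simp only [Pi.sub_apply, nextOffset]
  linarith

lemma monotoneOn_iterate_nextOffset_sub (hN : 1 ≤ N) (hap : IsParam N a p)
    (huv : MonotoneOn (v - u) (Set.Icc 1 N)) (k : ℕ) :
    MonotoneOn ((nextOffset N a p)^[k] v - (nextOffset N a p)^[k] u) (Set.Icc 1 N) := by
  induction k with
  | zero => exact huv
  | succ k ih =>
    rw [Function.iterate_succ_apply', Function.iterate_succ_apply']
    exact monotoneOn_nextOffset_sub hN hap ih

lemma IsOffset.le_of_monotoneOn_sub (hu : IsOffset N u) (hv : IsOffset N v)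
    (huv : MonotoneOn (v - u) (Set.Icc 1 N)) {j : ℕ} (hj : j ∈ Icc 1 N) : u j ≤ v j := by
  obtain ⟨hj1, hjN⟩ := mem_Icc.1 hj
  have := huv ⟨le_rfl, hj1.trans hjN⟩ ⟨hj1, hjN⟩ hj1
  simp only [Pi.sub_apply, hu.1, hv.1, sub_zero] at this
  linarith

lemma recStep_eq_traj (hN : 1 ≤ N) (hap : IsParam N a p) (hu : IsOffset N u) {y : ℝ → ℝ}
    (hy : Set.EqOn y (traj N p u) (Set.Ici 0)) :
    recStep N a p y = traj N p (nextOffset N a p u) := by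
  funext t
  refine sum_congr rfl fun j hj => ?_
  rw [tinv_eq_trajInv hN hap.pos hu hy (hap.nonneg hj),
    tinv_eq_trajInv hN hap.pos hu hy (hap.nonneg (mem_Icc.2 ⟨le_rfl, hN⟩)), nextOffset,
    sub_sub_eq_add_sub, sub_add_eq_add_sub]

lemma iterR_eqOn_traj (hN : 1 ≤ N) (hap : IsParam N a p) (hu : IsOffset N u) {y₀ : ℝ → ℝ}
    (hy₀ : Set.EqOn y₀ (traj N p u) (Set.Ici 0)) (k : ℕ) :
    Set.EqOn (iterR N a p y₀ k) (traj N p ((nextOffset N a p)^[k] u)) (Set.Ici 0) := by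
  induction k with
  | zero => exact hy₀
  | succ k ih =>
    rw [Function.iterate_succ_apply',
      ← recStep_eq_traj hN hap (isOffset_iterate_nextOffset hN hap hu k) ih]
    exact fun _ _ => rfl

lemma isStatTraj_traj (hN : 1 ≤ N) (hap : IsParam N a p) (hL : IsOffset N L)
    (hfix : ∀ j ∈ Icc 1 N, nextOffset N a p L j = L j) : IsStatTraj N a p (traj N p L) := by
  have hmono := strictMonoOn_traj hN hap.pos hL
  refine ⟨hmono, ⟨fun t _ => traj_nonneg hap.pos L t, hmono.injOn, fun x hx =>
    ⟨_, trajInv_nonneg hN hap.pos hL hx, traj_trajInv hN hap.pos hL hx⟩⟩, fun t _ => ?_⟩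
  have hstep := recStep_eq_traj hN hap hL (Set.eqOn_refl _ _)
  rw [traj_congr hfix] at hstep
  exact congrFun hstep.symm t

lemma iterate_succ_nextOffset_le (hN : 1 ≤ N) (hap : IsParam N a p) (hu : IsOffset N u)
    (hstep : MonotoneOn (u - nextOffset N a p u) (Set.Icc 1 N)) (k : ℕ) {j : ℕ}
    (hj : j ∈ Icc 1 N) : (nextOffset N a p)^[k + 1] u j ≤ (nextOffset N a p)^[k] u j :=
  (isOffset_iterate_nextOffset hN hap hu (k + 1)).le_of_monotoneOn_sub
    (isOffset_iterate_nextOffset hN hap hu k)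
    (monotoneOn_iterate_nextOffset_sub hN hap hstep k) hj

lemma iterate_nextOffset_le_succ (hN : 1 ≤ N) (hap : IsParam N a p) (hu : IsOffset N u)
    (hstep : MonotoneOn (nextOffset N a p u - u) (Set.Icc 1 N)) (k : ℕ) {j : ℕ}
    (hj : j ∈ Icc 1 N) : (nextOffset N a p)^[k] u j ≤ (nextOffset N a p)^[k + 1] u j :=
  (isOffset_iterate_nextOffset hN hap hu k).le_of_monotoneOn_sub
    (isOffset_iterate_nextOffset hN hap hu (k + 1))
    (monotoneOn_iterate_nextOffset_sub hN hap hstep k) hj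

lemma isStatTraj_of_tendsto_iterate (hN : 1 ≤ N) (hap : IsParam N a p) (hu : IsOffset N u)
    (hL : ∀ j ∈ Icc 1 N, Tendsto (fun k => (nextOffset N a p)^[k] u j) atTop (𝓝 (L j))) :
    IsStatTraj N a p (traj N p L) := by
  have hiter := isOffset_iterate_nextOffset hN hap hu
  have h1 : 1 ∈ Icc 1 N := mem_Icc.2 ⟨le_rfl, hN⟩
  have hLoff : IsOffset N L := by
    refine ⟨tendsto_nhds_unique (hL 1 h1) ?_, fun i hi j hj hij => ?_⟩
    · simpa only [fun k => (hiter k).1] using tendsto_const_nhds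
    · exact le_of_tendsto_of_tendsto' (hL i (mem_Icc.2 hi)) (hL j (mem_Icc.2 hj))
        fun k => (hiter k).2 hi hj hij
  have hfix : ∀ j ∈ Icc 1 N, nextOffset N a p L j = L j := fun j hj => by
    have hnext : Tendsto (fun k => nextOffset N a p ((nextOffset N a p)^[k] u) j) atTop
        (𝓝 (nextOffset N a p L j)) :=
      (tendsto_trajInv hN hL (a j)).sub (tendsto_trajInv hN hL (a 1))
    simp only [← Function.iterate_succ_apply' (nextOffset N a p)] at hnext
    exact tendsto_nhds_unique hnext ((tendsto_add_atTop_iff_nat 1).2 (hL j hj))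
  exact isStatTraj_traj hN hap hLoff hfix

lemma exists_isStatTraj_of_antitone (hN : 1 ≤ N) (hap : IsParam N a p) (hu : IsOffset N u)
    (hstep : MonotoneOn (u - nextOffset N a p u) (Set.Icc 1 N)) :
    ∃ y : ℝ → ℝ, (∀ t, Tendsto (fun k => traj N p ((nextOffset N a p)^[k] u) t) atTop
      (𝓝 (y t))) ∧ IsStatTraj N a p y := by
  have hL : ∀ j ∈ Icc 1 N, Tendsto (fun k => (nextOffset N a p)^[k] u j) atTop
      (𝓝 (⨅ k, (nextOffset N a p)^[k] u j)) := fun _ hj =>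
    tendsto_atTop_ciInf
      (antitone_nat_of_succ_le fun k => iterate_succ_nextOffset_le hN hap hu hstep k hj)
      ⟨0, Set.forall_mem_range.2 fun k => (isOffset_iterate_nextOffset hN hap hu k).nonneg hj⟩
  exact ⟨_, tendsto_traj hL, isStatTraj_of_tendsto_iterate hN hap hu hL⟩

lemma exists_isStatTraj_of_monotone (hN : 1 ≤ N) (hap : IsParam N a p) (hu : IsOffset N u)
    (hstep : MonotoneOn (nextOffset N a p u - u) (Set.Icc 1 N)) :
    ∃ y : ℝ → ℝ, (∀ t, Tendsto (fun k => traj N p ((nextOffset N a p)^[k] u) t) atTop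
      (𝓝 (y t))) ∧ IsStatTraj N a p y := by
  have hle := iterate_nextOffset_le_succ hN hap hu hstep
  have hbdd : ∀ k j, (nextOffset N a p)^[k + 1] u j ≤ a j / qq p 1 := fun k j => by
    rw [Function.iterate_succ_apply']
    exact nextOffset_le hN hap (isOffset_iterate_nextOffset hN hap hu k) j
  have hL : ∀ j ∈ Icc 1 N, Tendsto (fun k => (nextOffset N a p)^[k] u j) atTop
      (𝓝 (⨆ k, (nextOffset N a p)^[k] u j)) := fun j hj =>
    tendsto_atTop_ciSup (monotone_nat_of_le_succ fun k => hle k hj)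
      ⟨a j / qq p 1, Set.forall_mem_range.2 fun k => (hle k hj).trans (hbdd k j)⟩
  exact ⟨_, tendsto_traj hL, isStatTraj_of_tendsto_iterate hN hap hu hL⟩

lemma qq_mul_sub_wsum_succ (p u : ℕ → ℝ) (n : ℕ) :
    qq p (n + 1) * u (n + 1) - wsum p u (n + 1) = qq p n * u (n + 1) - wsum p u n := by
  simp only [qq, wsum, sum_Icc_succ_top (Nat.le_add_left 1 n)]
  ring

lemma cminus_one : cminus a p 1 = 0 := by simp [cminus]

lemma cminus_two : cminus a p 2 = a 2 / qq p 1 := by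
  rw [cminus, if_neg (by norm_num), Icc_self, sum_singleton, show 2 - 1 = 1 from rfl]
  ring

lemma cminus_succ {n : ℕ} (hn : 2 ≤ n) :
    cminus a p (n + 1) = cminus a p n + (a (n + 1) - a n) / qq p n := by
  rw [cminus, cminus, if_neg (by omega), if_neg (by omega), sum_Icc_succ_top (by omega),
    Nat.add_sub_cancel]
  ring

lemma isOffset_cminus (hap : IsParam N a p) : IsOffset N (cminus a p) := by
  refine ⟨cminus_one, monotoneOn_of_le_add_one Set.ordConnected_Icc fun n _ hn hn' => ?_⟩
  have hq := qq_pos hap.pos hn.1 hn.2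
  rcases eq_or_lt_of_le hn.1 with rfl | hn2
  · rw [cminus_one, show 1 + 1 = 2 from rfl, cminus_two]
    exact div_nonneg (hap.nonneg (mem_Icc.2 hn')) hq.le
  · rw [cminus_succ hn2]
    have := div_nonneg (sub_nonneg.2 (hap.monotoneOn hn hn' (Nat.le_succ n))) hq.le
    linarith

lemma traj_cminus_cminus (hap : IsParam N a p) {j : ℕ} (hj2 : 2 ≤ j) (hjN : j ≤ N) :
    traj N p (cminus a p) (cminus a p j) = a j := by
  rw [traj_offset_eq (isOffset_cminus hap).2 (mem_Icc.2 ⟨by omega, hjN⟩)]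
  induction j, hj2 using Nat.le_induction with
  | base =>
    have hq := qq_pos hap.pos le_rfl (by omega : 1 ≤ N)
    rw [qq_mul_sub_wsum_succ p _ 1, cminus_two]
    simp [wsum, cminus_one, mul_div_cancel₀ _ hq.ne']
  | succ n hn ih =>
    have hq := qq_pos hap.pos (by omega : 1 ≤ n) (by omega : n ≤ N)
    rw [qq_mul_sub_wsum_succ, cminus_succ hn, mul_add, mul_div_cancel₀ _ hq.ne']
    linarith [ih (by omega)]

lemma trajInv_cminus_a_one (hN : 1 ≤ N) (hap : IsParam N a p) :
    trajInv N p (cminus a p) (a 1) = a 1 / qq p 1 := by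
  have hq := qq_pos hap.pos le_rfl hN
  refine trajInv_eq_of_traj_eq hN hap.pos (isOffset_cminus hap) (div_nonneg hap.1.le hq.le) ?_
  rw [traj_eq_of_le_of_le hN (fun l hl => ?_) (fun l hl => ?_), wsum, Icc_self, sum_singleton,
    cminus_one, mul_zero, sub_zero, mul_div_cancel₀ _ hq.ne']
  · rw [Icc_self, mem_singleton] at hl
    rw [hl, cminus_one]
    exact div_nonneg hap.1.le hq.le
  · obtain ⟨hl1, hlN⟩ := mem_Ioc.1 hl
    have h2 : 2 ∈ Set.Icc 1 N := ⟨by omega, by omega⟩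
    calc a 1 / qq p 1 ≤ a 2 / qq p 1 :=
          div_le_div_of_nonneg_right (hap.monotoneOn ⟨le_rfl, hN⟩ h2 (by omega)) hq.le
      _ = cminus a p 2 := cminus_two.symm
      _ ≤ cminus a p l := (isOffset_cminus hap).2 h2 ⟨by omega, hlN⟩ (by omega)

/-- Starting from `cminus`, the first step lowers every offset `j ≥ 2` by the same amount
`a 1 / qq p 1`. -/
lemma monotoneOn_cminus_sub_nextOffset (hN : 1 ≤ N) (hap : IsParam N a p) :
    MonotoneOn (cminus a p - nextOffset N a p (cminus a p)) (Set.Icc 1 N) := by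
  have hc := isOffset_cminus hap
  have hval : ∀ j ∈ Set.Icc 2 N,
      (cminus a p - nextOffset N a p (cminus a p)) j = a 1 / qq p 1 :=
    fun j ⟨hj2, hjN⟩ => by
      rw [Pi.sub_apply, nextOffset, trajInv_eq_of_traj_eq hN hap.pos hc
        (hc.nonneg (mem_Icc.2 ⟨by omega, hjN⟩)) (traj_cminus_cminus hap hj2 hjN),
        trajInv_cminus_a_one hN hap]
      ring
  refine monotoneOn_of_le_add_one Set.ordConnected_Icc fun n _ hn hn' => ?_
  rw [hval (n + 1) ⟨Nat.succ_le_succ hn.1, hn'.2⟩]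
  rcases eq_or_lt_of_le hn.1 with rfl | hn2
  · rw [Pi.sub_apply, hc.1, (isOffset_nextOffset hN hap _).1, sub_zero]
    exact div_nonneg hap.1.le (qq_pos hap.pos le_rfl hN).le
  · exact (hval n ⟨hn2, hn.2⟩).le

lemma eqOn_yplus0_traj_zero : Set.EqOn (yplus0 N p) (traj N p 0) (Set.Ici 0) := fun t ht => by
  simp only [yplus0, traj, qq, Pi.zero_apply, sub_zero, pos', max_eq_left (Set.mem_Ici.1 ht),
    sum_mul]

end RecurrenceR

open RecurrenceR

/-- monotonicity and asymptotics of the bounds, Proposition 3.7. -/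
theorem stmt_5 (N : ℕ) (hN : 1 ≤ N) (a p : ℕ → ℝ) (hap : IsParam N a p) :
    (∀ k : ℕ, ∀ t : ℝ, 0 ≤ t →
        iterR N a p (yminus0 N a p) k t ≤ iterR N a p (yminus0 N a p) (k + 1) t ∧
        iterR N a p (yplus0 N p) (k + 1) t ≤ iterR N a p (yplus0 N p) k t) ∧
    ∃ ym yp : ℝ → ℝ,
      (∀ t : ℝ, 0 ≤ t →
        Filter.Tendsto (fun k => iterR N a p (yminus0 N a p) k t) Filter.atTop (nhds (ym t))) ∧
      (∀ t : ℝ, 0 ≤ t →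
        Filter.Tendsto (fun k => iterR N a p (yplus0 N p) k t) Filter.atTop (nhds (yp t))) ∧
      IsStatTraj N a p ym ∧ IsStatTraj N a p yp := by
  have hc := isOffset_cminus hap
  have h0 : IsOffset N 0 := ⟨rfl, monotoneOn_const⟩
  have hc_step := monotoneOn_cminus_sub_nextOffset hN hap
  have h0_step : MonotoneOn (nextOffset N a p 0 - 0) (Set.Icc 1 N) := by
    simpa only [sub_zero] using (isOffset_nextOffset hN hap 0).2
  have hminus := iterR_eqOn_traj hN hap hc (Set.eqOn_refl (yminus0 N a p) _)
  have hplus := iterR_eqOn_traj hN hap h0 eqOn_yplus0_traj_zero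
  obtain ⟨ym, hym, hym_stat⟩ := exists_isStatTraj_of_antitone hN hap hc hc_step
  obtain ⟨yp, hyp, hyp_stat⟩ := exists_isStatTraj_of_monotone hN hap h0 h0_step
  refine ⟨fun k t ht => ⟨?_, ?_⟩, ym, yp, fun t ht => ?_, fun t ht => ?_, hym_stat,
    hyp_stat⟩
  · rw [hminus k ht, hminus (k + 1) ht]
    exact traj_le_traj_of_le hap.pos
      (fun _ hj => iterate_succ_nextOffset_le hN hap hc hc_step k hj) t
  · rw [hplus k ht, hplus (k + 1) ht]
    exact traj_le_traj_of_le hap.pos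
      (fun _ hj => iterate_nextOffset_le_succ hN hap h0 h0_step k hj) t
  · exact (hym t).congr fun k => (hminus k ht).symm
  · exact (hyp t).congr fun k => (hplus k ht).symm
end

section
/- Let N ≥ 2, let (a,p) ∈ P^{2N}, and let s^{(0)}, s^{(1)} ∈ ℝ^N satisfy, with the convention s^{(m)}(0) := 0, 0 < s^{(0)}(i) − s^{(0)}(i−1) ≤ s^{(1)}(i) − s^{(1)}(i−1) for every i ∈ {1,...,N}. For m ∈ {0,1}, define y^{(m)}(t) := Σ_{j=1}^N p_j·(t − s^{(m)}(j) + s^{(m)}(1))_+, let t^{(m)} be the inverse of the increasing bijection y^{(m)}: ℝ_{≥0} → ℝ_{≥0}, and let G^{(m)} be the DC graph on {1,...,N} with edge set {(i,j) ∈ E_N : t^{(m)}(a_i) − s^{(m)}(j) + s^{(m)}(1) > 0}. Then ‖T(G^{(1)})(s^{(1)}) − T(G^{(0)})(s^{(0)})‖_∞ ≤ (1 − q_1/q_N)·‖s^{(1)} − s^{(0)}‖_∞, where ‖·‖_∞ is the sup norm on ℝ^N. -/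
open Filter Topology
open scoped Classical

/-!
Write `σ_j = s j - s 1` and `truncT a p s i K = (a i + ∑_{j ≤ K} p_j σ_j) / q_K`. For a
monotone `s`, `t = tinv (trajOfS N p s) (a i)` solves `∑_j p_j (t - σ_j)₊ = a i`, and
`b = bG (GrFromS N a p s) i` is the largest index `≥ i` with `σ_b < t` (or `i` itself). From `(t - σ)₊ ≥ t - σ` one gets
`t ≤ truncT K` for every `K`, and the choice of `b` makes `T(G)(s)(i) = truncT b` the minimum of
`truncT K` over `i ≤ K ≤ N`.

For a fixed cut-off `K`, the two tuples give values differing by the `p`-weighted mean over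
`j ≤ K` of `δ_j = (s⁽¹⁾_j - s⁽⁰⁾_j) - (s⁽¹⁾_1 - s⁽⁰⁾_1)`. The hypothesis makes `s⁽¹⁾ - s⁽⁰⁾`
nondecreasing from `0`, so `δ_1 = 0` and `0 ≤ δ_j ≤ δ_N ≤ ‖s⁽¹⁾ - s⁽⁰⁾‖_∞`; the mean is therefore
at most `(1 - q_1/q_K) δ_N ≤ (1 - q_1/q_N) ‖s⁽¹⁾ - s⁽⁰⁾‖_∞`. Minima of two functions on a common
set differ by at most the sup distance between the functions.
-/

open Finset

lemma sum_Icc_one_add_sum_Ioc {M : Type*} [AddCommMonoid M] (f : ℕ → M) {K L : ℕ} (h : K ≤ L) :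
    ∑ j ∈ Icc 1 K, f j + ∑ j ∈ Ioc K L, f j = ∑ j ∈ Icc 1 L, f j := by
  rw [← Nat.zero_add 1, Finset.Icc_add_one_left_eq_Ioc, Finset.Icc_add_one_left_eq_Ioc]
  exact sum_Ioc_consecutive f (Nat.zero_le K) h

lemma monotoneOn_Icc_of_le_sub_one {f : ℕ → ℝ} {m N : ℕ}
    (h : ∀ k, m < k → k ≤ N → f (k - 1) ≤ f k) : MonotoneOn f (Set.Icc m N) :=
  monotoneOn_of_le_succ Set.ordConnected_Icc fun k _ ⟨hmk, _⟩ ⟨_, hkN⟩ => by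
    rw [Order.succ_eq_add_one] at hkN ⊢
    simpa only [Nat.add_sub_cancel] using h (k + 1) (by omega) hkN

lemma abs_sub_le_of_isMinOn {α : Type*} {f g : α → ℝ} {S : Set α} {a b : α} {c : ℝ}
    (ha : a ∈ S) (hb : b ∈ S) (hfa : IsMinOn f S a) (hgb : IsMinOn g S b)
    (hfg : ∀ x ∈ S, |f x - g x| ≤ c) : |f a - g b| ≤ c := by
  rw [abs_sub_le_iff]
  constructor
  · linarith [isMinOn_iff.mp hfa b hb, (abs_le.mp (hfg b hb)).2]
  · linarith [isMinOn_iff.mp hgb a ha, (abs_le.mp (hfg a ha)).1]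

section qq

variable {N : ℕ} {p : ℕ → ℝ}

lemma qq_add_sum_Ioc {K L : ℕ} (h : K ≤ L) : qq p K + ∑ j ∈ Ioc K L, p j = qq p L :=
  sum_Icc_one_add_sum_Ioc p h

lemma qq_mono (hp : ∀ j, 1 ≤ j → j ≤ N → 0 < p j) {K L : ℕ} (hKL : K ≤ L) (hLN : L ≤ N) :
    qq p K ≤ qq p L :=
  sum_le_sum_of_subset_of_nonneg (Icc_subset_Icc_right hKL) fun j hj _ =>
    (hp j (mem_Icc.mp hj).1 ((mem_Icc.mp hj).2.trans hLN)).le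

lemma qq_pos (hp : ∀ j, 1 ≤ j → j ≤ N → 0 < p j) {K : ℕ} (hK : 1 ≤ K) (hKN : K ≤ N) :
    0 < qq p K :=
  sum_pos (fun j hj => hp j (mem_Icc.mp hj).1 ((mem_Icc.mp hj).2.trans hKN))
    ⟨1, mem_Icc.mpr ⟨le_rfl, hK⟩⟩

end qq

/-- `TG a p E s i` is definitionally `truncT a p s i (bG E i)`. -/
noncomputable def truncT (a p s : ℕ → ℝ) (i K : ℕ) : ℝ :=
  (1 / qq p K) * (a i + ∑ j ∈ Icc 1 K, p j * (s j - s 1))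

section truncT

variable {N : ℕ} {a p s : ℕ → ℝ} {i : ℕ}

lemma abs_truncT_sub_truncT_le {s₀ s₁ : ℕ → ℝ} (hp : ∀ j, 1 ≤ j → j ≤ N → 0 < p j)
    (hd : MonotoneOn (s₁ - s₀) (Set.Icc 1 N)) {K : ℕ} (hK : 1 ≤ K) (hKN : K ≤ N) :
    |truncT a p s₁ i K - truncT a p s₀ i K| ≤
      (1 - qq p 1 / qq p N) * ((s₁ N - s₀ N) - (s₁ 1 - s₀ 1)) := by
  set δ : ℕ → ℝ := fun j => (s₁ j - s₀ j) - (s₁ 1 - s₀ 1) with hδ_def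
  have hδ : ∀ j, 1 ≤ j → j ≤ N → 0 ≤ δ j ∧ δ j ≤ δ N := fun j hj hjN =>
    ⟨sub_nonneg.mpr (hd ⟨le_rfl, hK.trans hKN⟩ ⟨hj, hjN⟩ hj),
      sub_le_sub_right (hd ⟨hj, hjN⟩ ⟨hj.trans hjN, le_rfl⟩ hjN) _⟩
  have hq1 := qq_pos hp le_rfl (hK.trans hKN)
  have hqK := qq_pos hp hK hKN
  have hdiff : truncT a p s₁ i K - truncT a p s₀ i K = (∑ j ∈ Icc 1 K, p j * δ j) / qq p K := by
    rw [truncT, truncT, ← mul_sub, add_sub_add_left_eq_sub, ← sum_sub_distrib, one_div_mul_eq_div]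
    congr 1
    exact sum_congr rfl fun j _ => by rw [hδ_def]; ring
  have hsplit : ∑ j ∈ Icc 1 K, p j * δ j = ∑ j ∈ Ioc 1 K, p j * δ j := by
    rw [← sum_Icc_one_add_sum_Ioc _ hK, Icc_self, sum_singleton, hδ_def]
    simp
  have hlo : 0 ≤ ∑ j ∈ Icc 1 K, p j * δ j := sum_nonneg fun j hj => by
    obtain ⟨hj1, hjK⟩ := mem_Icc.mp hj
    exact mul_nonneg (hp j hj1 (hjK.trans hKN)).le (hδ j hj1 (hjK.trans hKN)).1
  have hhi : ∑ j ∈ Icc 1 K, p j * δ j ≤ (qq p K - qq p 1) * δ N := by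
    rw [hsplit, ← qq_add_sum_Ioc hK, add_sub_cancel_left, sum_mul]
    refine sum_le_sum fun j hj => ?_
    obtain ⟨hj1, hjK⟩ := mem_Ioc.mp hj
    exact mul_le_mul_of_nonneg_left (hδ j hj1.le (hjK.trans hKN)).2 (hp j hj1.le (hjK.trans hKN)).le
  rw [hdiff, abs_of_nonneg (div_nonneg hlo hqK.le), div_le_iff₀ hqK]
  calc ∑ j ∈ Icc 1 K, p j * δ j ≤ (qq p K - qq p 1) * δ N := hhi
    _ = (1 - qq p 1 / qq p K) * δ N * qq p K := by field_simp
    _ ≤ (1 - qq p 1 / qq p N) * δ N * qq p K := by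
      gcongr
      · exact (hδ N (hK.trans hKN) le_rfl).1
      · exact qq_mono hp hKN le_rfl

end truncT

section trajOfS

variable {N : ℕ} {a p s : ℕ → ℝ} {i : ℕ}

lemma trajOfS_tinv (hp : ∀ j, 1 ≤ j → j ≤ N → 0 < p j) (hN : 1 ≤ N)
    (hs : MonotoneOn s (Set.Icc 1 N)) {x : ℝ} (hx : 0 ≤ x) :
    trajOfS N p s (tinv (trajOfS N p s) x) = x := by
  have hp1 := hp 1 le_rfl hN
  have hcont : Continuous (trajOfS N p s) := by
    unfold trajOfS pos'
    fun_prop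
  have h0 : trajOfS N p s 0 = 0 := sum_eq_zero fun j hj => by
    obtain ⟨hj1, hjN⟩ := mem_Icc.mp hj
    have := hs ⟨le_rfl, hN⟩ ⟨hj1, hjN⟩ hj1
    rw [pos', max_eq_right (by linarith), mul_zero]
  have hxM : x ≤ trajOfS N p s (x / p 1) := by
    have h1 : p 1 * pos' (x / p 1 - s 1 + s 1) = x := by
      rw [sub_add_cancel, pos', max_eq_left (div_nonneg hx hp1.le), mul_div_cancel₀ _ hp1.ne']
    refine h1.ge.trans (single_le_sum (f := fun j => p j * pos' (x / p 1 - s j + s 1))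
      (fun j hj => ?_) (mem_Icc.mpr ⟨le_rfl, hN⟩))
    exact mul_nonneg (hp j (mem_Icc.mp hj).1 (mem_Icc.mp hj).2).le (le_max_right _ _)
  obtain ⟨u, hu, hyu⟩ := intermediate_value_Icc (div_nonneg hx hp1.le) hcont.continuousOn
    ⟨h0.symm ▸ hx, hxM⟩
  exact Function.invFunOn_eq ⟨u, hu.1, hyu⟩

lemma trajOfS_eq_sum_Icc {b : ℕ} (hbN : b ≤ N) {t : ℝ} (ht : ∀ j ∈ Ioc b N, t ≤ s j - s 1) :
    trajOfS N p s t = ∑ j ∈ Icc 1 b, p j * pos' (t - s j + s 1) := by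
  rw [trajOfS, ← sum_Icc_one_add_sum_Ioc _ hbN, add_eq_left]
  exact sum_eq_zero fun j hj => by
    rw [pos', max_eq_right (by linarith [ht j hj]), mul_zero]

lemma le_truncT_of_trajOfS_eq (hp : ∀ j, 1 ≤ j → j ≤ N → 0 < p j) {t : ℝ}
    (ht : trajOfS N p s t = a i) {K : ℕ} (hK : 1 ≤ K) (hKN : K ≤ N) :
    t ≤ truncT a p s i K := by
  have hmass : ∑ j ∈ Icc 1 K, p j * (t - (s j - s 1)) ≤ a i := by
    rw [← ht, trajOfS, ← sum_Icc_one_add_sum_Ioc _ hKN]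
    refine le_add_of_le_of_nonneg (sum_le_sum fun j hj => ?_) (sum_nonneg fun j hj => ?_)
    · rw [sub_sub_eq_add_sub, add_sub_right_comm]
      exact mul_le_mul_of_nonneg_left (le_max_left _ _)
        (hp j (mem_Icc.mp hj).1 ((mem_Icc.mp hj).2.trans hKN)).le
    · obtain ⟨hj1, hjN⟩ := mem_Ioc.mp hj
      exact mul_nonneg (hp j (by omega) hjN).le (le_max_right _ _)
  have hsum : ∑ j ∈ Icc 1 K, p j * (t - (s j - s 1)) =
      qq p K * t - ∑ j ∈ Icc 1 K, p j * (s j - s 1) := by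
    simp only [mul_sub, sum_sub_distrib, qq, sum_mul]
  rw [truncT, one_div_mul_eq_div, le_div_iff₀ (qq_pos hp hK hKN)]
  linarith

lemma truncT_le_of_trajOfS_eq (hp : ∀ j, 1 ≤ j → j ≤ N → 0 < p j) {t u : ℝ}
    (ht : trajOfS N p s t = a i) {b : ℕ} (hb : 1 ≤ b) (hbN : b ≤ N)
    (htail : ∀ j ∈ Ioc b N, t ≤ s j - s 1) (htu : t ≤ u) (hsu : ∀ j ∈ Icc 1 b, s j - s 1 ≤ u) :
    truncT a p s i b ≤ u := by
  have hbound : a i + ∑ j ∈ Icc 1 b, p j * (s j - s 1) ≤ qq p b * u := by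
    rw [← ht, trajOfS_eq_sum_Icc hbN htail, ← sum_add_distrib, qq, sum_mul]
    refine sum_le_sum fun j hj => ?_
    rw [← mul_add]
    refine mul_le_mul_of_nonneg_left ?_ (hp j (mem_Icc.mp hj).1 ((mem_Icc.mp hj).2.trans hbN)).le
    have := hsu j hj
    rw [pos', max_add]
    exact max_le (by linarith) (by linarith)
  rw [truncT, one_div_mul_eq_div, div_le_iff₀ (qq_pos hp hb hbN)]
  linarith

lemma truncT_le_truncT_of_le (hp : ∀ j, 1 ≤ j → j ≤ N → 0 < p j) {b K : ℕ} (hb : 1 ≤ b)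
    (hbK : b ≤ K) (hKN : K ≤ N) (hs : ∀ j ∈ Ioc b K, truncT a p s i b ≤ s j - s 1) :
    truncT a p s i b ≤ truncT a p s i K := by
  have hu : a i + ∑ j ∈ Icc 1 b, p j * (s j - s 1) = qq p b * truncT a p s i b := by
    rw [truncT, one_div_mul_eq_div, mul_div_cancel₀ _ (qq_pos hp hb (hbK.trans hKN)).ne']
  have htail : (qq p K - qq p b) * truncT a p s i b ≤ ∑ j ∈ Ioc b K, p j * (s j - s 1) := by
    rw [← qq_add_sum_Ioc hbK, add_sub_cancel_left, sum_mul]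
    exact sum_le_sum fun j hj => mul_le_mul_of_nonneg_left (hs j hj)
      (hp j (by linarith [(mem_Ioc.mp hj).1]) ((mem_Ioc.mp hj).2.trans hKN)).le
  conv_rhs => rw [truncT, one_div_mul_eq_div, ← sum_Icc_one_add_sum_Ioc _ hbK, ← add_assoc, hu]
  rw [le_div_iff₀ (qq_pos hp (hb.trans hbK) hKN)]
  linarith

end trajOfS

section bG

variable {N : ℕ} {E : Finset (ℕ × ℕ)} {i j : ℕ}

lemma bG_mem_Icc (hE : E ⊆ ENfin N) (hi : 1 ≤ i) (hiN : i ≤ N) : bG E i ∈ Set.Icc i N := by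
  rw [bG, if_neg (by omega)]
  refine ⟨le_max_left _ _, max_le hiN (Finset.sup_le fun e he => ?_)⟩
  have := hE (mem_filter.mp he).1
  simp only [ENfin, mem_filter, mem_product, mem_Icc] at this
  exact this.1.2.2

lemma le_bG_of_mem (hi : i ≠ 0) (h : (i, j) ∈ E) : j ≤ bG E i := by
  rw [bG, if_neg hi]
  exact le_max_of_le_right
    (le_sup (s := E.filter fun e => e.1 = i) (f := fun e => e.2) (mem_filter.mpr ⟨h, rfl⟩))

lemma mem_of_lt_bG (hi : i ≠ 0) (h : i < bG E i) : (i, bG E i) ∈ E := by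
  rw [bG, if_neg hi] at h ⊢
  have hsup := lt_max_iff.mp h |>.resolve_left (lt_irrefl i)
  rw [max_eq_right hsup.le]
  obtain ⟨e, he, hsup_eq⟩ := exists_mem_eq_sup (E.filter fun e => e.1 = i)
    (nonempty_iff_ne_empty.mpr fun hF => by
      rw [hF, sup_empty] at hsup
      exact Nat.not_lt_zero _ hsup)
    (fun e => e.2)
  obtain ⟨heE, rfl⟩ := mem_filter.mp he
  rwa [hsup_eq]

end bG

lemma mem_GrFromS {N : ℕ} {a p s : ℕ → ℝ} {i j : ℕ} :
    (i, j) ∈ GrFromS N a p s ↔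
      (1 ≤ i ∧ i < j ∧ j ≤ N) ∧ s j - s 1 < tinv (trajOfS N p s) (a i) := by
  simp only [GrFromS, ENfin, mem_filter, mem_product, mem_Icc]
  constructor
  · rintro ⟨⟨⟨⟨hi, -⟩, -, hj⟩, hij⟩, h⟩
    exact ⟨⟨hi, hij, hj⟩, by linarith⟩
  · rintro ⟨⟨hi, hij, hj⟩, h⟩
    exact ⟨⟨⟨⟨hi, by omega⟩, by omega, hj⟩, hij⟩, by linarith⟩

theorem isMinOn_truncT_bG_GrFromS {N : ℕ} {a p s : ℕ → ℝ} {i : ℕ}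
    (hp : ∀ j, 1 ≤ j → j ≤ N → 0 < p j) (hs : MonotoneOn s (Set.Icc 1 N)) (hai : 0 ≤ a i)
    (hi : 1 ≤ i) (hiN : i ≤ N) :
    IsMinOn (truncT a p s i) (Set.Icc i N) (bG (GrFromS N a p s) i) := by
  set t := tinv (trajOfS N p s) (a i)
  have hi0 : i ≠ 0 := by omega
  have ht : trajOfS N p s t = a i := trajOfS_tinv hp (hi.trans hiN) hs hai
  obtain ⟨b, hb⟩ : ∃ b, bG (GrFromS N a p s) i = b := ⟨_, rfl⟩
  obtain ⟨hib, hbN⟩ : b ∈ Set.Icc i N := hb ▸ bG_mem_Icc (filter_subset _ _) hi hiN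
  have htail : ∀ j ∈ Ioc b N, t ≤ s j - s 1 := fun j hj => by
    obtain ⟨hbj, hjN⟩ := mem_Ioc.mp hj
    by_contra! hjt
    have := hb ▸ le_bG_of_mem hi0 (mem_GrFromS.mpr ⟨⟨hi, by omega, hjN⟩, hjt⟩)
    omega
  rw [hb]
  refine isMinOn_iff.mpr fun K ⟨hiK, hKN⟩ => ?_
  rcases hib.lt_or_eq with hib | rfl
  -- `σ_j < t` for all `j ≤ b`, so `truncT b ≤ t ≤ truncT K`.
  · have hsb : s b - s 1 < t := (mem_GrFromS.mp (hb ▸ mem_of_lt_bG hi0 (hb ▸ hib))).2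
    calc truncT a p s i b ≤ t :=
          truncT_le_of_trajOfS_eq hp ht (hi.trans hib.le) hbN htail le_rfl fun j hj => by
            obtain ⟨hj1, hjb⟩ := mem_Icc.mp hj
            linarith [hs ⟨hj1, hjb.trans hbN⟩ ⟨hj1.trans hjb, hbN⟩ hjb]
      _ ≤ truncT a p s i K := le_truncT_of_trajOfS_eq hp ht (hi.trans hiK) hKN
  -- `truncT i ≤ σ_j` for `j > i`, so averaging in the later `σ_j` can only increase it.
  · refine truncT_le_truncT_of_le hp hi hiK hKN fun j hj => ?_
    obtain ⟨hij, hjK⟩ := mem_Ioc.mp hj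
    refine truncT_le_of_trajOfS_eq hp ht hi hiN htail
      (htail j (mem_Ioc.mpr ⟨hij, hjK.trans hKN⟩)) fun k hk => ?_
    obtain ⟨hk1, hki⟩ := mem_Icc.mp hk
    linarith [hs ⟨hk1, hki.trans hiN⟩ ⟨hk1.trans (hki.trans hij.le), hjK.trans hKN⟩ (by omega)]

/-- improved contraction across graphs, Lemma 3.10. -/
theorem stmt_7 (N : ℕ) (hN : 2 ≤ N) (a p : ℕ → ℝ) (hap : IsParam N a p)
    (s0 s1 : ℕ → ℝ) (h00 : s0 0 = 0) (h10 : s1 0 = 0)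
    (hss : ∀ i, 1 ≤ i → i ≤ N →
      0 < s0 i - s0 (i - 1) ∧ s0 i - s0 (i - 1) ≤ s1 i - s1 (i - 1)) :
    ∀ i, 1 ≤ i → i ≤ N →
      |TG a p (GrFromS N a p s1) s1 i - TG a p (GrFromS N a p s0) s0 i| ≤
        (1 - qq p 1 / qq p N) *
          (Finset.Icc 1 N).sup' (Finset.nonempty_Icc.mpr (by omega)) (fun j => |s1 j - s0 j|) := by
  obtain ⟨ha1, ha, hp⟩ := hap
  intro i hi hiN
  have hs0 : MonotoneOn s0 (Set.Icc 1 N) :=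
    monotoneOn_Icc_of_le_sub_one fun k _ hkN => by linarith [(hss k (by omega) hkN).1]
  have hs1 : MonotoneOn s1 (Set.Icc 1 N) :=
    monotoneOn_Icc_of_le_sub_one fun k _ hkN => by linarith [hss k (by omega) hkN]
  have hd : MonotoneOn (s1 - s0) (Set.Icc 0 N) :=
    monotoneOn_Icc_of_le_sub_one fun k hk hkN => by
      simp only [Pi.sub_apply]
      linarith [(hss k hk hkN).2]
  have hai : 0 ≤ a i := by
    have hmono : MonotoneOn a (Set.Icc 1 N) := monotoneOn_Icc_of_le_sub_one fun k hk hkN => by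
      simpa [Nat.sub_add_cancel (by omega : 1 ≤ k)] using (ha (k - 1) (by omega) (by omega)).le
    linarith [hmono ⟨le_rfl, by omega⟩ ⟨hi, hiN⟩ hi]
  have hr : qq p 1 / qq p N ≤ 1 :=
    div_le_one_of_le₀ (qq_mono hp (by omega) le_rfl) (qq_pos hp (by omega) le_rfl).le
  have he : (s1 N - s0 N) - (s1 1 - s0 1) ≤
      (Finset.Icc 1 N).sup' (Finset.nonempty_Icc.mpr (by omega)) (fun j => |s1 j - s0 j|) := by
    have hd1 : s1 0 - s0 0 ≤ s1 1 - s0 1 := hd ⟨le_rfl, by omega⟩ ⟨by omega, by omega⟩ zero_le_one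
    calc (s1 N - s0 N) - (s1 1 - s0 1) ≤ |s1 N - s0 N| := by
          linarith [le_abs_self (s1 N - s0 N)]
      _ ≤ _ := le_sup' (fun j => |s1 j - s0 j|) (mem_Icc.mpr ⟨by omega, le_rfl⟩)
  calc _ ≤ (1 - qq p 1 / qq p N) * ((s1 N - s0 N) - (s1 1 - s0 1)) :=
        abs_sub_le_of_isMinOn (bG_mem_Icc (filter_subset _ _) hi hiN)
          (bG_mem_Icc (filter_subset _ _) hi hiN) (isMinOn_truncT_bG_GrFromS hp hs1 hai hi hiN)
          (isMinOn_truncT_bG_GrFromS hp hs0 hai hi hiN) fun K hK =>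
            abs_truncT_sub_truncT_le hp (hd.mono (Set.Icc_subset_Icc_left zero_le_one))
              (hi.trans hK.1) hK.2
    _ ≤ _ := mul_le_mul_of_nonneg_left he (sub_nonneg.mpr hr)
end

section
/- Let G be a DC graph on {1,...,N} and let (a,p) ∈ P^{2N}. Then (a,p) ∈ P_G if and only if (G,a,p) satisfies both conditions (C_{m(G)}^>) and (C_{M(G)}^≤), i.e., z_1^G(a,p) > Z^G_{i,j}(a,p) for every (i,j) ∈ m(G) and z_1^G(a,p) ≤ Z^G_{i,j}(a,p) for every (i,j) ∈ M(G). -/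
open Filter Topology
open scoped Classical

/-!
The increments `ζ` of a stationary tuple `s` with `Gr(a, p) = G` solve the linear system `S^G`.
Subtracting consecutive equations makes it triangular,
`ζ i = u_i(ζ 1) + ∑_{(i, k) ∈ G} γ^G_{i,k} ζ k`, and unrolling this recursion along the paths
of `G` gives `ζ i = ∑_j Γ^G_{i,j} u_j(ζ 1)`; the equation for `i = 1` then pins `ζ 1 = z_1^G`.
So `ζ = z^G`, `s 1 = z_1^G` and `s j - s i = Z^G_{i,j}`, which are the inequalities.

Conversely, the inequalities on `M(G)` force `z_l^G > 0` for `l ≥ 2` (downward induction on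
`l`, reading off the sign of `z_l^G` from the equation at `l`). Hence `Z^G` is monotone under
nesting, the inequalities on `m(G)` and `M(G)` propagate to all edges and non-edges, and the
partial sums of `z^G` form a stationary tuple with graph `G`; by uniqueness of stationary tuples
it is `s`.
-/

namespace DCGraph

open Finset

lemma pos'_of_nonneg {x : ℝ} (h : 0 ≤ x) : pos' x = x := max_eq_left h

lemma pos'_of_nonpos {x : ℝ} (h : x ≤ 0) : pos' x = 0 := max_eq_right h

lemma pos'_mono {x y : ℝ} (h : x ≤ y) : pos' x ≤ pos' y := max_le_max h le_rfl

lemma sum_Icc_add_one_add {f : ℕ → ℝ} {w u v : ℕ} (hwu : w ≤ u) (huv : u ≤ v) :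
    ∑ j ∈ Icc (w + 1) u, f j + ∑ j ∈ Icc (u + 1) v, f j = ∑ j ∈ Icc (w + 1) v, f j := by
  simp only [Icc_add_one_left_eq_Ioc]
  exact sum_Ioc_consecutive f hwu huv

lemma sum_Icc_one_add {f : ℕ → ℝ} {u v : ℕ} (huv : u ≤ v) :
    ∑ j ∈ Icc 1 u, f j + ∑ j ∈ Icc (u + 1) v, f j = ∑ j ∈ Icc 1 v, f j :=
  sum_Icc_add_one_add (Nat.zero_le u) huv

lemma sum_le_sum_of_nonpos_of_nonneg {ι : Type*} [DecidableEq ι] {s t : Finset ι}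
    {f : ι → ℝ} (hs : ∀ i ∈ s \ t, f i ≤ 0) (ht : ∀ i ∈ t \ s, 0 ≤ f i) :
    ∑ i ∈ s, f i ≤ ∑ i ∈ t, f i := by
  rw [← sum_inter_add_sum_sdiff s t, ← sum_inter_add_sum_sdiff t s, inter_comm]
  linarith [sum_nonpos hs, sum_nonneg ht]

lemma forall_eq_iff_forall_dpar_eq {N : ℕ} {f g : ℕ → ℝ} (hg : g 0 = 0) :
    (∀ i ∈ Icc 1 N, f i = g i) ↔ ∀ i ∈ Icc 1 N, dpar f i = g i - g (i - 1) := by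
  constructor
  · intro h i hi
    obtain ⟨h1, hiN⟩ := mem_Icc.1 hi
    unfold dpar
    split_ifs with hi1
    · subst hi1
      rw [h 1 hi, Nat.sub_self, hg, sub_zero]
    · rw [h i hi, h (i - 1) (mem_Icc.2 ⟨by omega, by omega⟩)]
  · intro h i hi
    induction i with
    | zero => simp at hi
    | succ i ih =>
      have hstep := h (i + 1) hi
      simp only [dpar, Nat.add_sub_cancel] at hstep
      split_ifs at hstep with hi1
      · obtain rfl : i = 0 := by omega
        rw [hstep, hg, sub_zero]
      · rw [ih (mem_Icc.2 ⟨by omega, by simp only [mem_Icc] at hi; omega⟩)] at hstep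
        linarith

section Parameters

variable {N : ℕ} {a p : ℕ → ℝ}

lemma qq_sub_qq (p : ℕ → ℝ) {u v : ℕ} (h : u ≤ v) :
    qq p v - qq p u = ∑ j ∈ Icc (u + 1) v, p j := by
  rw [qq, qq, ← sum_Icc_one_add h]
  ring

lemma qq_pos (hp : ∀ i, 1 ≤ i → i ≤ N → 0 < p i) {i : ℕ} (h1 : 1 ≤ i) (hi : i ≤ N) :
    0 < qq p i :=
  sum_pos (fun j hj => hp j (mem_Icc.1 hj).1 ((mem_Icc.1 hj).2.trans hi))
    ⟨1, mem_Icc.2 ⟨le_rfl, h1⟩⟩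

lemma qq_mono (hp : ∀ i, 1 ≤ i → i ≤ N → 0 < p i) {u v : ℕ} (h : u ≤ v) (hv : v ≤ N) :
    qq p u ≤ qq p v := by
  rw [← sub_nonneg, qq_sub_qq p h]
  exact sum_nonneg fun j hj =>
    (hp j (by simp only [mem_Icc] at hj; omega) ((mem_Icc.1 hj).2.trans hv)).le

lemma dpar_pos (ha1 : 0 < a 1) (ha : ∀ i, 1 ≤ i → i < N → a i < a (i + 1)) {i : ℕ}
    (h1 : 1 ≤ i) (hi : i ≤ N) : 0 < dpar a i := by
  unfold dpar
  split_ifs with h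
  · exact ha1
  · have := ha (i - 1) (by omega) (by omega)
    rw [Nat.sub_add_cancel h1] at this
    linarith

lemma monotoneOn_of_lt_succ {s : ℕ → ℝ} (h : ∀ i, 1 ≤ i → i < N → s i < s (i + 1)) :
    MonotoneOn s (Set.Icc 1 N) :=
  (strictMonoOn_of_lt_add_one Set.ordConnected_Icc fun i _ hi hi' =>
    h i hi.1 (by simp only [Set.mem_Icc] at hi'; omega)).monotoneOn

end Parameters

section Graph

variable {N : ℕ} {E : Finset (ℕ × ℕ)}

lemma mem_ENfin {e : ℕ × ℕ} : e ∈ ENfin N ↔ 1 ≤ e.1 ∧ e.1 < e.2 ∧ e.2 ≤ N := by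
  simp only [ENfin, mem_filter, mem_product, mem_Icc]
  omega

lemma Nested.trans {e f g : ℕ × ℕ} (hef : Nested e f) (hfg : Nested f g) : Nested e g := by
  unfold Nested at *
  omega

lemma Nested.eq_of_le {e f : ℕ × ℕ} (h : Nested e f) (hlen : f.2 - f.1 ≤ e.2 - e.1) :
    f = e := by
  unfold Nested at h
  exact Prod.ext (by omega) (by omega)

lemma bG_zero (E : Finset (ℕ × ℕ)) : bG E 0 = 1 := by simp [bG]

lemma le_bG (E : Finset (ℕ × ℕ)) (i : ℕ) : i ≤ bG E i := by
  unfold bG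
  split_ifs
  · omega
  · exact le_max_left _ _

lemma one_le_bG (E : Finset (ℕ × ℕ)) (i : ℕ) : 1 ≤ bG E i := by
  rcases Nat.eq_zero_or_pos i with rfl | h
  · rw [bG_zero]
  · exact h.trans_le (le_bG E i)

lemma bG_le (hE : IsDCGraph N E) (hN : 1 ≤ N) {i : ℕ} (hi : i ≤ N) : bG E i ≤ N := by
  unfold bG
  split_ifs
  · exact hN
  · exact max_le hi <| Finset.sup_le fun e he =>
      (mem_ENfin.1 (hE.1 (mem_filter.1 he).1)).2.2

lemma mem_iff_le_bG (hE : IsDCGraph N E) {i j : ℕ} :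
    (i, j) ∈ E ↔ 1 ≤ i ∧ i < j ∧ j ≤ bG E i := by
  constructor
  · intro he
    obtain ⟨h1, hij, -⟩ := mem_ENfin.1 (hE.1 he)
    refine ⟨h1, hij, ?_⟩
    unfold bG
    rw [if_neg (by simp only at h1; omega)]
    exact le_max_of_le_right
      (le_sup (s := E.filter fun e => e.1 = i) (f := fun e => e.2) (mem_filter.2 ⟨he, rfl⟩))
  · rintro ⟨h1, hij, hjb⟩
    unfold bG at hjb
    rw [if_neg (by omega), le_max_iff] at hjb
    rcases hjb with hji | hjsup
    · omega
    · obtain ⟨e, he, hje⟩ := (Finset.le_sup_iff (by simp only [bot_eq_zero']; omega)).1 hjsup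
      obtain ⟨heE, rfl⟩ := mem_filter.1 he
      exact hE.2 e heE (e.1, j) ⟨le_rfl, hij, hje⟩

lemma bG_pred_le (hE : IsDCGraph N E) (i : ℕ) : bG E (i - 1) ≤ bG E i := by
  rcases Nat.lt_or_ge (i - 1) 1 with h | h
  · rw [show i - 1 = 0 by omega, bG_zero]
    exact one_le_bG E i
  rcases Nat.lt_or_ge i (bG E (i - 1)) with hlt | hge
  · have hedge := (mem_iff_le_bG hE).2 ⟨h, by omega, le_rfl⟩
    exact ((mem_iff_le_bG hE).1 (hE.2 _ hedge (i, _) ⟨by omega, hlt, le_rfl⟩)).2.2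
  · exact hge.trans (le_bG E i)

lemma exists_mem_maxE_nested (hE : IsDCGraph N E) {e : ℕ × ℕ} (he : e ∈ E) :
    ∃ f ∈ maxE E, Nested e f := by
  have hself : Nested e e := ⟨le_rfl, (mem_ENfin.1 (hE.1 he)).2.1, le_rfl⟩
  obtain ⟨f, hf, hmax⟩ := (E.filter (Nested e)).exists_max_image (fun f => f.2 - f.1)
    ⟨e, mem_filter.2 ⟨he, hself⟩⟩
  obtain ⟨hfE, hef⟩ := mem_filter.1 hf
  refine ⟨f, mem_filter.2 ⟨hfE, fun g hg hfg => ?_⟩, hef⟩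
  exact Nested.eq_of_le hfg (hmax g (mem_filter.2 ⟨hg, Nested.trans hef hfg⟩))

lemma exists_mem_minNE_nested {e : ℕ × ℕ} (he : e ∈ ENfin N \ E) :
    ∃ f ∈ minNE N E, Nested f e := by
  have hself : Nested e e := ⟨le_rfl, (mem_ENfin.1 (mem_sdiff.1 he).1).2.1, le_rfl⟩
  obtain ⟨f, hf, hmin⟩ := ((ENfin N \ E).filter (Nested · e)).exists_min_image
    (fun f => f.2 - f.1) ⟨e, mem_filter.2 ⟨he, hself⟩⟩
  obtain ⟨hfE, hfe⟩ := mem_filter.1 hf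
  refine ⟨f, mem_filter.2 ⟨hfE, fun g hg hgf => ?_⟩, hfe⟩
  exact (Nested.eq_of_le hgf (hmin g (mem_filter.2 ⟨hg, Nested.trans hgf hfe⟩))).symm

end Graph

section Paths

variable {E : Finset (ℕ × ℕ)} {γ : ℕ → ℕ → ℝ}

def pathTerm (E : Finset (ℕ × ℕ)) (γ : ℕ → ℕ → ℝ) (l : List ℕ) : ℝ :=
  if List.IsChain (fun u v => (u, v) ∈ E) l then pathProd γ l else 0

lemma pathTerm_singleton (x : ℕ) : pathTerm E γ [x] = 1 := by simp [pathTerm, pathProd]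

lemma pathTerm_cons_cons (x y : ℕ) (l : List ℕ) :
    pathTerm E γ (x :: y :: l) = if (x, y) ∈ E then γ x y * pathTerm E γ (y :: l) else 0 := by
  unfold pathTerm
  by_cases hxy : (x, y) ∈ E <;> by_cases hl : List.IsChain (fun u v => (u, v) ∈ E) (y :: l) <;>
    simp [List.isChain_cons_cons, pathProd, hxy, hl]

lemma pathTerm_nonneg (hγ : ∀ u v, (u, v) ∈ E → 0 ≤ γ u v) (l : List ℕ) :
    0 ≤ pathTerm E γ l := by
  induction l with
  | nil => simp [pathTerm, pathProd]
  | cons x l ih =>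
    cases l with
    | nil => simp [pathTerm_singleton]
    | cons y l =>
      rw [pathTerm_cons_cons]
      split_ifs with h
      · exact mul_nonneg (hγ x y h) ih
      · exact le_rfl

lemma GammaPath_eq_sum {i j : ℕ} (hij : i ≤ j) :
    GammaPath E γ i j =
      ∑ S ∈ (Ioo i j).powerset, pathTerm E γ (sort (insert i (insert j S)) (· ≤ ·)) := by
  rcases hij.eq_or_lt with rfl | hlt
  · simp [GammaPath, pathTerm_singleton]
  · rw [GammaPath, if_neg hlt.ne, if_pos hlt]
    exact sum_congr rfl fun S _ => if_congr Iff.rfl rfl rfl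

lemma GammaPath_nonneg (hγ : ∀ u v, (u, v) ∈ E → 0 ≤ γ u v) (i j : ℕ) :
    0 ≤ GammaPath E γ i j := by
  rcases le_or_gt i j with hij | hji
  · rw [GammaPath_eq_sum hij]
    exact sum_nonneg fun S _ => pathTerm_nonneg hγ _
  · simp [GammaPath, hji.ne', hji.not_gt]

lemma sort_insert_of_forall_lt {x : ℕ} {X : Finset ℕ} (h : ∀ y ∈ X, x < y) :
    sort (insert x X) (· ≤ ·) = x :: sort X (· ≤ ·) :=
  sort_insert _ (fun y hy => (h y hy).le) (fun hx => lt_irrefl x (h x hx))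

lemma pathTerm_sort_insert_insert {i k : ℕ} {X : Finset ℕ} (hik : i < k)
    (hX : ∀ y ∈ X, k ≤ y) :
    pathTerm E γ (sort (insert i (insert k X)) (· ≤ ·)) =
      if (i, k) ∈ E then γ i k * pathTerm E γ (sort (insert k X) (· ≤ ·)) else 0 := by
  have hk : sort (insert k X) (· ≤ ·) = k :: sort (X.erase k) (· ≤ ·) := by
    rw [← sort_insert_of_forall_lt, ← erase_insert_eq_erase, insert_erase (mem_insert_self k X)]
    intro y hy
    exact lt_of_le_of_ne (hX y (mem_of_mem_erase hy)) (ne_of_mem_erase hy).symm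
  rw [sort_insert_of_forall_lt, hk, pathTerm_cons_cons]
  intro y hy
  rcases mem_insert.1 hy with rfl | hy
  · exact hik
  · exact hik.trans_le (hX y hy)

lemma sum_powerset_Ioo_insert {M : Type*} [AddCommMonoid M] (f : Finset ℕ → M) {i j : ℕ}
    (hij : i < j) :
    ∑ S ∈ (Ioo i j).powerset, f (insert j S) =
      ∑ k ∈ Icc (i + 1) j, ∑ S ∈ (Ioo k j).powerset, f (insert k (insert j S)) := by
  induction hd : j - i generalizing i with
  | zero => omega
  | succ d ih =>
    rcases (show i + 1 = j ∨ i + 1 < j by omega) with rfl | hlt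
    · have hIoo : Ioo i (i + 1) = ∅ := by
        ext
        simp only [mem_Ioo, notMem_empty, iff_false]
        omega
      simp [hIoo]
    · have hIoo : Ioo i j = insert (i + 1) (Ioo (i + 1) j) := by
        rw [Ioo_insert_left hlt, Ico_add_one_left_eq_Ioo]
      rw [hIoo, sum_powerset_insert (by simp), ← insert_Icc_add_one_left_eq_Icc hlt.le,
        sum_insert (by simp), ← ih hlt (by omega), add_comm]
      exact congrArg₂ _ (sum_congr rfl fun S _ => by rw [insert_comm]) rfl

lemma GammaPath_eq_sum_first_edge {i j : ℕ} (hij : i < j) :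
    GammaPath E γ i j =
      ∑ k ∈ Icc (i + 1) j, if (i, k) ∈ E then γ i k * GammaPath E γ k j else 0 := by
  rw [GammaPath_eq_sum hij.le,
    sum_powerset_Ioo_insert (fun T => pathTerm E γ (sort (insert i T) (· ≤ ·))) hij]
  refine sum_congr rfl fun k hk => ?_
  obtain ⟨hik, hkj⟩ := mem_Icc.1 hk
  have hfirst : ∀ S ∈ (Ioo k j).powerset,
      pathTerm E γ (sort (insert i (insert k (insert j S))) (· ≤ ·)) =
        if (i, k) ∈ E then γ i k * pathTerm E γ (sort (insert k (insert j S)) (· ≤ ·))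
        else 0 := by
    intro S hS
    refine pathTerm_sort_insert_insert (by omega) fun y hy => ?_
    rcases mem_insert.1 hy with rfl | hy
    · exact hkj
    · exact (mem_Ioo.1 (mem_powerset.1 hS hy)).1.le
  rw [sum_congr rfl hfirst, GammaPath_eq_sum hkj]
  split_ifs
  · rw [mul_sum]
  · simp

end Paths

section System

variable {N : ℕ} {a p : ℕ → ℝ} {E : Finset (ℕ × ℕ)}

noncomputable def cumSum (ζ : ℕ → ℝ) (i : ℕ) : ℝ := ∑ l ∈ Icc 1 i, ζ l

lemma cumSum_one (ζ : ℕ → ℝ) : cumSum ζ 1 = ζ 1 := by simp [cumSum]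

lemma cumSum_succ (ζ : ℕ → ℝ) (i : ℕ) : cumSum ζ (i + 1) = cumSum ζ i + ζ (i + 1) :=
  sum_Icc_succ_top (by omega) ζ

lemma cumSum_sub_cumSum (ζ : ℕ → ℝ) {i j : ℕ} (h : i ≤ j) :
    cumSum ζ j - cumSum ζ i = ∑ l ∈ Icc (i + 1) j, ζ l := by
  rw [cumSum, cumSum, ← sum_Icc_one_add h]
  ring

lemma cumSum_congr {ζ ζ' : ℕ → ℝ} {i : ℕ} (h : ∀ l ∈ Icc 1 i, ζ l = ζ' l) :
    cumSum ζ i = cumSum ζ' i :=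
  sum_congr rfl h

noncomputable def systemSum (p : ℕ → ℝ) (E : Finset (ℕ × ℕ)) (ζ : ℕ → ℝ) (i : ℕ) : ℝ :=
  ∑ j ∈ Icc 1 (bG E i), p j * (cumSum ζ i - cumSum ζ j + ζ 1)

lemma solvesS_iff_systemSum {ζ : ℕ → ℝ} :
    SolvesS N a p E ζ ↔ ∀ i ∈ Icc 1 N, a i = systemSum p E ζ i :=
  ⟨fun h i hi => h i (mem_Icc.1 hi).1 (mem_Icc.1 hi).2,
    fun h i h1 hi => h i (mem_Icc.2 ⟨h1, hi⟩)⟩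

lemma systemSum_zero (p : ℕ → ℝ) (E : Finset (ℕ × ℕ)) (ζ : ℕ → ℝ) : systemSum p E ζ 0 = 0 := by
  simp [systemSum, bG_zero, cumSum]

lemma systemSum_sub (hE : IsDCGraph N E) (ζ : ℕ → ℝ) {i : ℕ} (hi : 1 ≤ i) :
    systemSum p E ζ i - systemSum p E ζ (i - 1) =
      qq p (bG E (i - 1)) * ζ i +
        ∑ j ∈ Icc (bG E (i - 1) + 1) (bG E i), p j * (ζ 1 - ∑ k ∈ Icc (i + 1) j, ζ k) := by
  have hmn := bG_pred_le hE i
  have him : i ≤ bG E (i - 1) + 1 := by have := le_bG E (i - 1); omega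
  have hstep : cumSum ζ i = cumSum ζ (i - 1) + ζ i := by
    simpa [Nat.sub_add_cancel hi] using cumSum_succ ζ (i - 1)
  have hlow : ∑ j ∈ Icc 1 (bG E (i - 1)), p j * (cumSum ζ i - cumSum ζ j + ζ 1) -
      systemSum p E ζ (i - 1) = qq p (bG E (i - 1)) * ζ i := by
    rw [systemSum, ← sum_sub_distrib, qq, sum_mul]
    exact sum_congr rfl fun j _ => by rw [hstep]; ring
  have hhigh : ∀ j ∈ Icc (bG E (i - 1) + 1) (bG E i),
      p j * (cumSum ζ i - cumSum ζ j + ζ 1) = p j * (ζ 1 - ∑ k ∈ Icc (i + 1) j, ζ k) := by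
    intro j hj
    rw [← cumSum_sub_cumSum ζ (by simp only [mem_Icc] at hj; omega)]
    ring
  rw [systemSum, ← sum_Icc_one_add hmn, sum_congr rfl hhigh]
  linarith

lemma sum_mul_sum_Icc_eq (p z : ℕ → ℝ) {i m n : ℕ} (hmn : m ≤ n) :
    ∑ j ∈ Icc (m + 1) n, p j * ∑ k ∈ Icc (i + 1) j, z k =
      ∑ k ∈ Icc (i + 1) n, (qq p n - qq p (max (k - 1) m)) * z k := by
  simp_rw [mul_sum]
  rw [sum_comm' (t' := Icc (i + 1) n) (s' := fun k => Icc (max (k - 1) m + 1) n)]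
  · refine sum_congr rfl fun k hk => ?_
    rw [qq_sub_qq p (by simp only [mem_Icc] at hk; omega), sum_mul]
  · intro j k
    simp only [mem_Icc]
    omega

/-- The inhomogeneous term of the triangular form of `S^G`, with `ζ 1` replaced by `t`. -/
noncomputable def uG (a p : ℕ → ℝ) (E : Finset (ℕ × ℕ)) (t : ℝ) (i : ℕ) : ℝ :=
  dpar a i / qq p (bG E (i - 1)) -
    t * ((qq p (bG E i) - qq p (bG E (i - 1))) / qq p (bG E (i - 1)))

/-- `z_i^G` with `z_1^G` replaced by `t`; `z_1^G` is the fixed point of `t ↦ zGWith N a p E t 1`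
(`zGWith_one_eq_iff`). -/
noncomputable def zGWith (N : ℕ) (a p : ℕ → ℝ) (E : Finset (ℕ × ℕ)) (t : ℝ) (i : ℕ) : ℝ :=
  ∑ j ∈ Icc i N, GammaG p E i j * uG a p E t j

lemma systemSum_sub_eq_dpar_iff (hp : ∀ i, 1 ≤ i → i ≤ N → 0 < p i) (hE : IsDCGraph N E)
    (hN : 1 ≤ N) (ζ : ℕ → ℝ) {i : ℕ} (hi : i ∈ Icc 1 N) :
    systemSum p E ζ i - systemSum p E ζ (i - 1) = dpar a i ↔
      ζ i = uG a p E (ζ 1) i + ∑ k ∈ Icc (i + 1) (bG E i), gammaG p E i k * ζ k := by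
  obtain ⟨h1, hiN⟩ := mem_Icc.1 hi
  have hmn := bG_pred_le hE i
  have hq : 0 < qq p (bG E (i - 1)) := qq_pos hp (one_le_bG E _) (bG_le hE hN (by omega))
  have hrows : ∑ j ∈ Icc (bG E (i - 1) + 1) (bG E i), p j * (ζ 1 - ∑ k ∈ Icc (i + 1) j, ζ k) =
      ζ 1 * (qq p (bG E i) - qq p (bG E (i - 1))) -
        qq p (bG E (i - 1)) * ∑ k ∈ Icc (i + 1) (bG E i), gammaG p E i k * ζ k := by
    have hterm : ∀ k ∈ Icc (i + 1) (bG E i),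
        (qq p (bG E i) - qq p (max (k - 1) (bG E (i - 1)))) * ζ k =
          qq p (bG E (i - 1)) * (gammaG p E i k * ζ k) := fun k _ => by
      rw [gammaG]
      field_simp
    simp_rw [mul_sub]
    rw [sum_sub_distrib, ← sum_mul, ← qq_sub_qq p hmn, sum_mul_sum_Icc_eq p ζ hmn,
      sum_congr rfl hterm, ← mul_sum]
    ring
  have huG : uG a p E (ζ 1) i =
      (dpar a i - ζ 1 * (qq p (bG E i) - qq p (bG E (i - 1)))) / qq p (bG E (i - 1)) := by
    rw [uG]
    field_simp
  rw [systemSum_sub hE ζ h1, hrows, huG, ← sub_eq_iff_eq_add, eq_div_iff hq.ne']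
  constructor <;> intro h <;> linear_combination h

lemma GammaG_self (p : ℕ → ℝ) (E : Finset (ℕ × ℕ)) (i : ℕ) : GammaG p E i i = 1 := by
  simp [GammaG, GammaPath]

lemma filter_mem_Icc_eq_Icc_bG (hE : IsDCGraph N E) (hN : 1 ≤ N) {i : ℕ} (hi : i ∈ Icc 1 N) :
    (Icc (i + 1) N).filter (fun k => (i, k) ∈ E) = Icc (i + 1) (bG E i) := by
  have hbN := bG_le hE hN (mem_Icc.1 hi).2
  ext k
  simp only [mem_filter, mem_Icc, mem_iff_le_bG hE] at hi ⊢
  omega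

lemma zGWith_eq (hE : IsDCGraph N E) (hN : 1 ≤ N) (t : ℝ) {i : ℕ} (hi : i ∈ Icc 1 N) :
    zGWith N a p E t i =
      uG a p E t i + ∑ k ∈ Icc (i + 1) (bG E i), gammaG p E i k * zGWith N a p E t k := by
  have hfirst : ∀ j ∈ Icc (i + 1) N, GammaG p E i j * uG a p E t j =
      ∑ k ∈ Icc (i + 1) j,
        if (i, k) ∈ E then gammaG p E i k * (GammaG p E k j * uG a p E t j) else 0 := by
    intro j hj
    rw [GammaG, GammaPath_eq_sum_first_edge (by simp only [mem_Icc] at hj; omega), sum_mul]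
    refine sum_congr rfl fun k _ => ?_
    split_ifs <;> simp [GammaG, mul_assoc]
  rw [zGWith, ← insert_Icc_add_one_left_eq_Icc (mem_Icc.1 hi).2, sum_insert (by simp),
    GammaG_self, one_mul, sum_congr rfl hfirst,
    sum_comm' (t' := Icc (i + 1) N) (s' := fun k => Icc k N) (fun j k => by
      simp only [mem_Icc]; omega),
    ← filter_mem_Icc_eq_Icc_bG hE hN hi, sum_filter]
  congr 1
  refine sum_congr rfl fun k _ => ?_
  split_ifs
  · rw [zGWith, mul_sum]
  · simp

lemma eqOn_Icc_of_triangular {N : ℕ} {x y u : ℕ → ℝ} {c : ℕ → ℕ → ℝ} {b : ℕ → ℕ}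
    (hb : ∀ i ∈ Icc 1 N, b i ≤ N)
    (hx : ∀ i ∈ Icc 1 N, x i = u i + ∑ k ∈ Icc (i + 1) (b i), c i k * x k)
    (hy : ∀ i ∈ Icc 1 N, y i = u i + ∑ k ∈ Icc (i + 1) (b i), c i k * y k) :
    ∀ i ∈ Icc 1 N, x i = y i := by
  intro i hi
  induction hd : N - i using Nat.strong_induction_on generalizing i with
  | _ d ih =>
    have hbi := hb i hi
    rw [hx i hi, hy i hi]
    congr 1
    refine sum_congr rfl fun k hk => ?_
    simp only [mem_Icc] at hi hk
    rw [ih (N - k) (by omega) k (mem_Icc.2 ⟨by omega, by omega⟩) rfl]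

lemma solvesS_iff_eq_zGWith (hp : ∀ i, 1 ≤ i → i ≤ N → 0 < p i) (hE : IsDCGraph N E)
    (hN : 1 ≤ N) (ζ : ℕ → ℝ) :
    SolvesS N a p E ζ ↔ ∀ i ∈ Icc 1 N, ζ i = zGWith N a p E (ζ 1) i := by
  have hb : ∀ i ∈ Icc 1 N, bG E i ≤ N := fun i hi => bG_le hE hN (mem_Icc.1 hi).2
  have htri : (∀ i ∈ Icc 1 N, dpar a i = systemSum p E ζ i - systemSum p E ζ (i - 1)) ↔
      ∀ i ∈ Icc 1 N, ζ i = uG a p E (ζ 1) i + ∑ k ∈ Icc (i + 1) (bG E i), gammaG p E i k * ζ k :=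
    forall₂_congr fun i hi => eq_comm.trans (systemSum_sub_eq_dpar_iff hp hE hN ζ hi)
  rw [solvesS_iff_systemSum, forall_eq_iff_forall_dpar_eq (systemSum_zero p E ζ), htri]
  refine ⟨fun h => eqOn_Icc_of_triangular hb h fun i hi => zGWith_eq hE hN _ hi,
    fun h i hi => ?_⟩
  rw [h i hi, zGWith_eq hE hN _ hi]
  congr 1
  refine sum_congr rfl fun k hk => ?_
  have := hb i hi
  simp only [mem_Icc] at hi hk
  rw [h k (mem_Icc.2 ⟨by omega, by omega⟩)]

lemma zGWith_eq_sub (t : ℝ) (i : ℕ) :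
    zGWith N a p E t i =
      (∑ j ∈ Icc i N, GammaG p E i j * dpar a j / qq p (bG E (j - 1))) -
        t * ∑ j ∈ Icc i N,
          GammaG p E i j * (qq p (bG E j) - qq p (bG E (j - 1))) / qq p (bG E (j - 1)) := by
  rw [zGWith, mul_sum, ← sum_sub_distrib]
  exact sum_congr rfl fun j _ => by rw [uG]; ring

lemma zG_one : zG N a p E 1 = z1G N a p E := by simp [zG]

lemma zG_eq_zGWith {i : ℕ} (hi : i ≠ 1) : zG N a p E i = zGWith N a p E (z1G N a p E) i := by
  rw [zGWith_eq_sub, zG, if_neg hi]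

lemma gammaG_nonneg (hp : ∀ i, 1 ≤ i → i ≤ N → 0 < p i) (hE : IsDCGraph N E) {u v : ℕ}
    (huv : (u, v) ∈ E) : 0 ≤ gammaG p E u v := by
  obtain ⟨h1, huv', hvN⟩ : 1 ≤ u ∧ u < v ∧ v ≤ N := mem_ENfin.1 (hE.1 huv)
  have hvb := ((mem_iff_le_bG hE).1 huv).2.2
  have hbN := bG_le hE (by omega) (show u ≤ N by omega)
  exact div_nonneg (sub_nonneg.2 (qq_mono hp (max_le (by omega) (bG_pred_le hE u)) hbN))
    (qq_pos hp (one_le_bG E _) ((bG_pred_le hE u).trans hbN)).le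

lemma GammaG_nonneg (hp : ∀ i, 1 ≤ i → i ≤ N → 0 < p i) (hE : IsDCGraph N E) (i j : ℕ) :
    0 ≤ GammaG p E i j :=
  GammaPath_nonneg (fun _ _ h => gammaG_nonneg hp hE h) i j

lemma z1G_denominator_pos (hp : ∀ i, 1 ≤ i → i ≤ N → 0 < p i) (hE : IsDCGraph N E)
    (hN : 1 ≤ N) :
    0 < 1 + ∑ j ∈ Icc 1 N,
      GammaG p E 1 j * (qq p (bG E j) - qq p (bG E (j - 1))) / qq p (bG E (j - 1)) := by
  have hsum : 0 ≤ ∑ j ∈ Icc 1 N,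
      GammaG p E 1 j * (qq p (bG E j) - qq p (bG E (j - 1))) / qq p (bG E (j - 1)) := by
    refine sum_nonneg fun j hj => ?_
    have hbN := bG_le hE hN (mem_Icc.1 hj).2
    exact div_nonneg (mul_nonneg (GammaG_nonneg hp hE 1 j)
      (sub_nonneg.2 (qq_mono hp (bG_pred_le hE j) hbN)))
      (qq_pos hp (one_le_bG E _) ((bG_pred_le hE j).trans hbN)).le
  linarith

lemma z1G_pos (hap : IsParam N a p) (hE : IsDCGraph N E) (hN : 1 ≤ N) : 0 < z1G N a p E := by
  refine div_pos (sum_pos' (fun j hj => ?_) ⟨1, mem_Icc.2 ⟨le_rfl, hN⟩, ?_⟩)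
    (z1G_denominator_pos hap.2.2 hE hN)
  · obtain ⟨h1, hjN⟩ := mem_Icc.1 hj
    exact div_nonneg (mul_nonneg (GammaG_nonneg hap.2.2 hE 1 j)
      (dpar_pos hap.1 hap.2.1 h1 hjN).le)
      (qq_pos hap.2.2 (one_le_bG E _) ((bG_pred_le hE j).trans (bG_le hE hN hjN))).le
  · rw [GammaG_self, one_mul, Nat.sub_self, bG_zero]
    exact div_pos (dpar_pos hap.1 hap.2.1 le_rfl hN) (qq_pos hap.2.2 le_rfl hN)

lemma zGWith_one_eq_iff (hp : ∀ i, 1 ≤ i → i ≤ N → 0 < p i) (hE : IsDCGraph N E) (hN : 1 ≤ N)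
    {t : ℝ} : zGWith N a p E t 1 = t ↔ t = z1G N a p E := by
  rw [zGWith_eq_sub, z1G, eq_div_iff (z1G_denominator_pos hp hE hN).ne']
  constructor <;> intro h <;> linarith

theorem solvesS_iff_eq_zG (hp : ∀ i, 1 ≤ i → i ≤ N → 0 < p i) (hE : IsDCGraph N E)
    (hN : 1 ≤ N) (ζ : ℕ → ℝ) :
    SolvesS N a p E ζ ↔ ∀ i ∈ Icc 1 N, ζ i = zG N a p E i := by
  have h1 : 1 ∈ Icc 1 N := mem_Icc.2 ⟨le_rfl, hN⟩
  rw [solvesS_iff_eq_zGWith hp hE hN]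
  constructor
  · intro h
    have hz1 : ζ 1 = z1G N a p E := (zGWith_one_eq_iff hp hE hN).1 (h 1 h1).symm
    intro i hi
    rcases eq_or_ne i 1 with rfl | hi1
    · rw [hz1, zG_one]
    · rw [h i hi, zG_eq_zGWith hi1, hz1]
  · intro h
    have hz1 : ζ 1 = z1G N a p E := by rw [h 1 h1, zG_one]
    intro i hi
    rcases eq_or_ne i 1 with rfl | hi1
    · rw [hz1, (zGWith_one_eq_iff hp hE hN).2 rfl]
    · rw [h i hi, zG_eq_zGWith hi1, hz1]

end System

section Conditions

variable {N : ℕ} {a p : ℕ → ℝ} {E : Finset (ℕ × ℕ)}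

/-- The minimal non-edge below `(l - 1, j)` has `ZG ≤ ZG l j`, as `zG l ≤ 0 < zG k` for `k > l`. -/
lemma z1G_le_ZG_of_not_mem (hmin : ∀ e ∈ minNE N E, z1G N a p E ≤ ZG N a p E e.1 e.2)
    {l j : ℕ} (hl : 2 ≤ l) (hlj : l ≤ j) (hjN : j ≤ N) (hnot : (l - 1, j) ∉ E)
    (hneg : zG N a p E l ≤ 0) (hlater : ∀ k ∈ Icc (l + 1) N, 0 < zG N a p E k) :
    z1G N a p E ≤ ZG N a p E l j := by
  obtain ⟨f, hf, hfj⟩ := exists_mem_minNE_nested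
    (mem_sdiff.2 ⟨mem_ENfin.2 ⟨by simp only; omega, by simp only; omega, hjN⟩, hnot⟩)
  refine (hmin f hf).trans (sum_le_sum_of_nonpos_of_nonneg (fun k hk => ?_) fun k hk => ?_)
  · simp only [Nested, Finset.mem_sdiff, mem_Icc] at hk hfj
    obtain rfl : k = l := by omega
    exact hneg
  · simp only [Finset.mem_sdiff, mem_Icc] at hk
    exact (hlater k (mem_Icc.2 ⟨hk.1.1, hk.1.2.trans hjN⟩)).le

theorem zG_pos (hap : IsParam N a p) (hE : IsDCGraph N E) (hN : 1 ≤ N)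
    (hmin : ∀ e ∈ minNE N E, z1G N a p E ≤ ZG N a p E e.1 e.2) :
    ∀ l ∈ Icc 2 N, 0 < zG N a p E l := by
  have hz1 := z1G_pos hap hE hN
  have hsys := (solvesS_iff_eq_zG hap.2.2 hE hN (zG N a p E)).2 fun _ _ => rfl
  rw [solvesS_iff_systemSum, forall_eq_iff_forall_dpar_eq (systemSum_zero p E _)] at hsys
  intro l hl
  induction hd : N - l using Nat.strong_induction_on generalizing l with
  | _ d ih =>
    obtain ⟨hl2, hlN⟩ := mem_Icc.1 hl
    have hlater : ∀ k ∈ Icc (l + 1) N, 0 < zG N a p E k := fun k hk => by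
      simp only [mem_Icc] at hk
      exact ih (N - k) (by omega) k (mem_Icc.2 ⟨by omega, hk.2⟩) rfl
    by_contra! hneg
    by_cases hedge : (l - 1, l) ∈ E
    · -- the rows entering equation `l` all contribute `≤ 0`, yet `dpar a l > 0`
      have hlm : l ≤ bG E (l - 1) := ((mem_iff_le_bG hE).1 hedge).2.2
      have hbN := bG_le hE hN hlN
      have hrows : ∑ j ∈ Icc (bG E (l - 1) + 1) (bG E l),
          p j * (zG N a p E 1 - ∑ k ∈ Icc (l + 1) j, zG N a p E k) ≤ 0 := by
        refine sum_nonpos fun j hj => ?_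
        simp only [mem_Icc] at hj
        have hnot : (l - 1, j) ∉ E := fun h => by
          have := ((mem_iff_le_bG hE).1 h).2.2
          omega
        have hZ := z1G_le_ZG_of_not_mem hmin hl2 (by omega) (hj.2.trans hbN) hnot hneg hlater
        rw [ZG] at hZ
        exact mul_nonpos_of_nonneg_of_nonpos (hap.2.2 j (by omega) (hj.2.trans hbN)).le
          (by rw [zG_one]; linarith)
      have hdl := hsys l (mem_Icc.2 ⟨by omega, hlN⟩)
      rw [systemSum_sub hE _ (by omega)] at hdl
      have hq := qq_pos hap.2.2 (one_le_bG E (l - 1)) ((bG_pred_le hE l).trans hbN)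
      linarith [dpar_pos hap.1 hap.2.1 (by omega : 1 ≤ l) hlN,
        mul_nonpos_of_nonneg_of_nonpos hq.le hneg]
    · have hZ := z1G_le_ZG_of_not_mem hmin hl2 le_rfl hlN hedge hneg hlater
      simp only [ZG, Icc_eq_empty_of_lt (Nat.lt_succ_self l), sum_empty] at hZ
      linarith

lemma ZG_le_ZG_of_nested (hpos : ∀ k ∈ Icc 2 N, 0 < zG N a p E k) {e f : ℕ × ℕ}
    (hef : Nested e f) (hf : f ∈ ENfin N) : ZG N a p E e.1 e.2 ≤ ZG N a p E f.1 f.2 := by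
  obtain ⟨hf1, -, hfN⟩ := mem_ENfin.1 hf
  obtain ⟨he1, -, he2⟩ := hef
  refine sum_le_sum_of_subset_of_nonneg (Icc_subset_Icc (by omega) he2) fun k hk _ => ?_
  simp only [mem_Icc] at hk
  exact (hpos k (mem_Icc.2 ⟨by omega, by omega⟩)).le

theorem filter_ZG_lt_eq_iff (hap : IsParam N a p) (hE : IsDCGraph N E) (hN : 1 ≤ N) :
    (ENfin N).filter (fun e => ZG N a p E e.1 e.2 < z1G N a p E) = E ↔
      (∀ e ∈ maxE E, ZG N a p E e.1 e.2 < z1G N a p E) ∧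
        (∀ e ∈ minNE N E, z1G N a p E ≤ ZG N a p E e.1 e.2) := by
  constructor
  · intro hF
    refine ⟨fun e he => ?_, fun e he => ?_⟩
    · rw [← hF] at he
      exact (mem_filter.1 (mem_filter.1 he).1).2
    · obtain ⟨heN, heE⟩ := mem_sdiff.1 (mem_filter.1 he).1
      exact not_lt.1 fun h => heE (hF ▸ mem_filter.2 ⟨heN, h⟩)
  · rintro ⟨hmax, hmin⟩
    have hpos := zG_pos hap hE hN hmin
    ext e
    rw [mem_filter]
    constructor
    · rintro ⟨heN, hlt⟩
      by_contra heE
      obtain ⟨f, hf, hfe⟩ := exists_mem_minNE_nested (mem_sdiff.2 ⟨heN, heE⟩)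
      exact not_le.2 hlt ((hmin f hf).trans (ZG_le_ZG_of_nested hpos hfe heN))
    · intro he
      obtain ⟨f, hf, hef⟩ := exists_mem_maxE_nested hE he
      exact ⟨hE.1 he,
        (ZG_le_ZG_of_nested hpos hef (hE.1 (mem_filter.1 hf).1)).trans_lt (hmax f hf)⟩

end Conditions

section Stationary

variable {N : ℕ} {a p : ℕ → ℝ} {E : Finset (ℕ × ℕ)} {s s' : ℕ → ℝ}

lemma GrEdges_congr (h : ∀ i ∈ Icc 1 N, s i = s' i) : GrEdges N s = GrEdges N s' := by
  refine filter_congr fun e he => ?_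
  obtain ⟨h1, h12, h2N⟩ := mem_ENfin.1 he
  rw [h e.1 (mem_Icc.2 ⟨h1, by omega⟩), h e.2 (mem_Icc.2 ⟨by omega, h2N⟩),
    h 1 (mem_Icc.2 ⟨le_rfl, by omega⟩)]

lemma GrEdges_cumSum_zG :
    GrEdges N (cumSum (zG N a p E)) =
      (ENfin N).filter (fun e => ZG N a p E e.1 e.2 < z1G N a p E) := by
  refine filter_congr fun e he => ?_
  rw [cumSum_sub_cumSum _ (mem_ENfin.1 he).2.1.le, cumSum_one, zG_one, ZG]

lemma sum_pos'_eq_sum_Icc_bG (hE : IsDCGraph N E) (hN : 1 ≤ N) (hs1 : 0 < s 1)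
    (hmono : MonotoneOn s (Set.Icc 1 N)) (hG : GrEdges N s = E) {i : ℕ} (hi : i ∈ Icc 1 N) :
    ∑ j ∈ Icc 1 N, p j * pos' (s i - s j + s 1) =
      ∑ j ∈ Icc 1 (bG E i), p j * (s i - s j + s 1) := by
  obtain ⟨h1, hiN⟩ := mem_Icc.1 hi
  have hbN := bG_le hE hN hiN
  have hedge : ∀ j, i < j → j ≤ N → ((i, j) ∈ E ↔ s j - s i < s 1) := by
    intro j hij hjN
    rw [← hG, GrEdges, mem_filter, mem_ENfin]
    exact and_iff_right ⟨h1, hij, hjN⟩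
  rw [← sum_Icc_one_add hbN, sum_eq_zero (s := Icc (bG E i + 1) N), add_zero]
  · refine sum_congr rfl fun j hj => ?_
    obtain ⟨hj1, hjb⟩ := mem_Icc.1 hj
    rw [pos'_of_nonneg]
    rcases le_or_gt j i with hji | hij
    · linarith [hmono ⟨hj1, hji.trans hiN⟩ ⟨h1, hiN⟩ hji]
    · linarith [(hedge j hij (hjb.trans hbN)).1 ((mem_iff_le_bG hE).2 ⟨h1, hij, hjb⟩)]
  · intro j hj
    obtain ⟨hbj, hjN⟩ := mem_Icc.1 hj
    have hij : i < j := by have := le_bG E i; omega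
    have hnot : (i, j) ∉ E := fun h => by have := ((mem_iff_le_bG hE).1 h).2.2; omega
    rw [pos'_of_nonpos (by linarith [not_lt.1 (mt (hedge j hij hjN).2 hnot)]), mul_zero]

lemma stationary_eq_iff_solvesS {ζ : ℕ → ℝ} (hE : IsDCGraph N E) (hN : 1 ≤ N) (hs1 : 0 < s 1)
    (hmono : MonotoneOn s (Set.Icc 1 N)) (hG : GrEdges N s = E)
    (hζ : ∀ i ∈ Icc 1 N, cumSum ζ i = s i) :
    (∀ i ∈ Icc 1 N, a i = ∑ j ∈ Icc 1 N, p j * pos' (s i - s j + s 1)) ↔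
      SolvesS N a p E ζ := by
  have hζ1 : ζ 1 = s 1 := by rw [← cumSum_one ζ, hζ 1 (mem_Icc.2 ⟨le_rfl, hN⟩)]
  rw [solvesS_iff_systemSum]
  refine forall₂_congr fun i hi => ?_
  rw [sum_pos'_eq_sum_Icc_bG hE hN hs1 hmono hG hi, systemSum]
  have hbN := bG_le hE hN (mem_Icc.1 hi).2
  refine iff_of_eq (congrArg _ (sum_congr rfl fun j hj => ?_))
  rw [hζ i hi, hζ j (Icc_subset_Icc le_rfl hbN hj), hζ1]

lemma pos_of_isStationaryTuple (hN : 1 ≤ N) (hs : IsStationaryTuple N a p s) {i : ℕ}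
    (hi : i ∈ Icc 1 N) : 0 < s i :=
  hs.1.trans_le (monotoneOn_of_lt_succ hs.2.1 ⟨le_rfl, hN⟩ (mem_Icc.1 hi) (mem_Icc.1 hi).1)

/-- Comparing the equations at an index where `s' - s` is maximal (after normalising `s 1`)
forces all terms to agree. -/
lemma eq_one_and_le_of_isStationaryTuple (hp : ∀ i, 1 ≤ i → i ≤ N → 0 < p i) (hN : 1 ≤ N)
    (hs : IsStationaryTuple N a p s) (hs' : IsStationaryTuple N a p s') (h1 : s 1 ≤ s' 1) :
    s 1 = s' 1 ∧ ∀ i ∈ Icc 1 N, s' i ≤ s i := by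
  have hone : 1 ∈ Icc 1 N := mem_Icc.2 ⟨le_rfl, hN⟩
  obtain ⟨m, hm, hmax⟩ := (Icc 1 N).exists_max_image
    (fun i => (s' i - s' 1) - (s i - s 1)) ⟨1, hone⟩
  obtain ⟨hm1, hmN⟩ := mem_Icc.1 hm
  have hle : ∀ j ∈ Icc 1 N,
      p j * pos' (s m - s j + s 1) ≤ p j * pos' (s' m - s' j + s' 1) := fun j hj =>
    mul_le_mul_of_nonneg_left (pos'_mono (by linarith [hmax j hj]))
      (hp j (mem_Icc.1 hj).1 (mem_Icc.1 hj).2).le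
  have heq := (sum_eq_sum_iff_of_le hle).1 (by rw [← hs.2.2 m hm1 hmN, ← hs'.2.2 m hm1 hmN])
  have hdiag := heq m hm
  have hfirst := heq 1 hone
  simp only [sub_self, zero_add, sub_add_cancel] at hdiag hfirst
  rw [pos'_of_nonneg hs.1.le, pos'_of_nonneg hs'.1.le] at hdiag
  rw [pos'_of_nonneg (pos_of_isStationaryTuple hN hs hm).le,
    pos'_of_nonneg (pos_of_isStationaryTuple hN hs' hm).le] at hfirst
  have hone_eq := mul_left_cancel₀ (hp m hm1 hmN).ne' hdiag
  have hm_eq := mul_left_cancel₀ (hp 1 le_rfl hN).ne' hfirst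
  exact ⟨hone_eq, fun i hi => by linarith [hmax i hi]⟩

lemma isStationaryTuple_unique (hp : ∀ i, 1 ≤ i → i ≤ N → 0 < p i) (hN : 1 ≤ N)
    (hs : IsStationaryTuple N a p s) (hs' : IsStationaryTuple N a p s') :
    ∀ i ∈ Icc 1 N, s i = s' i := by
  rcases le_total (s 1) (s' 1) with h | h
  · obtain ⟨h11, hle⟩ := eq_one_and_le_of_isStationaryTuple hp hN hs hs' h
    obtain ⟨-, hge⟩ := eq_one_and_le_of_isStationaryTuple hp hN hs' hs h11.ge
    exact fun i hi => le_antisymm (hge i hi) (hle i hi)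
  · obtain ⟨h11, hle⟩ := eq_one_and_le_of_isStationaryTuple hp hN hs' hs h
    obtain ⟨-, hge⟩ := eq_one_and_le_of_isStationaryTuple hp hN hs hs' h11.ge
    exact fun i hi => le_antisymm (hle i hi) (hge i hi)

noncomputable def increments (s : ℕ → ℝ) (l : ℕ) : ℝ := if l = 1 then s 1 else s l - s (l - 1)

lemma cumSum_increments (s : ℕ → ℝ) {l : ℕ} (hl : 1 ≤ l) : cumSum (increments s) l = s l := by
  induction l, hl using Nat.le_induction with
  | base => simp [cumSum, increments]
  | succ l hl ih =>
    rw [cumSum_succ, ih, increments, if_neg (by omega), Nat.add_sub_cancel]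
    ring

lemma cumSum_zG_eqOn_of_GrEdges_eq (hap : IsParam N a p) (hE : IsDCGraph N E) (hN : 1 ≤ N)
    (hs : IsStationaryTuple N a p s) (hG : GrEdges N s = E) :
    ∀ i ∈ Icc 1 N, cumSum (zG N a p E) i = s i := by
  have hsol : SolvesS N a p E (increments s) :=
    (stationary_eq_iff_solvesS hE hN hs.1 (monotoneOn_of_lt_succ hs.2.1) hG
      fun i hi => cumSum_increments s (mem_Icc.1 hi).1).1
      fun i hi => hs.2.2 i (mem_Icc.1 hi).1 (mem_Icc.1 hi).2
  have hz := (solvesS_iff_eq_zG hap.2.2 hE hN _).1 hsol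
  intro i hi
  rw [← cumSum_increments s (mem_Icc.1 hi).1]
  exact cumSum_congr fun l hl => (hz l (Icc_subset_Icc le_rfl (mem_Icc.1 hi).2 hl)).symm

lemma isStationaryTuple_cumSum_zG (hap : IsParam N a p) (hE : IsDCGraph N E) (hN : 1 ≤ N)
    (hG : GrEdges N (cumSum (zG N a p E)) = E) :
    IsStationaryTuple N a p (cumSum (zG N a p E)) := by
  rw [GrEdges_cumSum_zG] at hG
  have hpos := zG_pos hap hE hN ((filter_ZG_lt_eq_iff hap hE hN).1 hG).2
  have hsucc : ∀ i, 1 ≤ i → i < N → cumSum (zG N a p E) i < cumSum (zG N a p E) (i + 1) :=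
    fun i h1 hiN => by
      linarith [cumSum_succ (zG N a p E) i, hpos (i + 1) (mem_Icc.2 ⟨by omega, by omega⟩)]
  have hone : 0 < cumSum (zG N a p E) 1 := by
    rw [cumSum_one, zG_one]
    exact z1G_pos hap hE hN
  refine ⟨hone, hsucc, fun i h1 hiN => ?_⟩
  rw [← GrEdges_cumSum_zG] at hG
  exact (stationary_eq_iff_solvesS hE hN hone (monotoneOn_of_lt_succ hsucc) hG
    fun _ _ => rfl).2 ((solvesS_iff_eq_zG hap.2.2 hE hN _).2 fun _ _ => rfl) i
    (mem_Icc.2 ⟨h1, hiN⟩)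

end Stationary

end DCGraph

open DCGraph

/-- inequalities characterizing `P_G`, Proposition 4.9. -/
theorem stmt_10 (N : ℕ) (hN : 1 ≤ N) (a p : ℕ → ℝ) (hap : IsParam N a p)
    (E : Finset (ℕ × ℕ)) (hE : IsDCGraph N E)
    (s : ℕ → ℝ) (hs : IsStationaryTuple N a p s) :
    GrEdges N s = E ↔
      ((∀ e ∈ maxE E, ZG N a p E e.1 e.2 < z1G N a p E) ∧
       (∀ e ∈ minNE N E, z1G N a p E ≤ ZG N a p E e.1 e.2)) := by
  rw [← filter_ZG_lt_eq_iff hap hE hN, ← GrEdges_cumSum_zG]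
  constructor
  · intro hG
    rwa [GrEdges_congr (cumSum_zG_eqOn_of_GrEdges_eq hap hE hN hs hG)]
  · intro hG
    rwa [GrEdges_congr
      (isStationaryTuple_unique hap.2.2 hN hs (isStationaryTuple_cumSum_zG hap hE hN hG))]
end

section
/- For every DC graph G on {1,...,N}, the interior of P_G relative to P^{2N} is non-empty. -/
open Filter Topology
open scoped Classical

/-!
On the set of tuples `s` with `0 < s 1 < ... < s N` and `s j - s i ≠ s 1` for all `i < j`, the
sign of every argument `s i - s j + s 1` is determined by the graph of `s`, so for tuples with
graph `E` the stationarity equations become the linear system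
`a i = ∑_{j ≤ bG E i} p j * (s i - s j + s 1)`.  A discrete maximum principle shows that this
system is invertible for every `p > 0`, so its solution depends continuously on `(a, p)` and the
strict sign pattern persists near any parameter where it holds.  A tuple with the pattern of a given
DC graph is built greedily from left to right; with `p = 1` it yields a parameter in the interior
of `P_G`.
-/

open Finset Matrix

lemma mem_ENfin_iff {N : ℕ} {e : ℕ × ℕ} : e ∈ ENfin N ↔ 1 ≤ e.1 ∧ e.1 < e.2 ∧ e.2 ≤ N := by
  simp only [ENfin, mem_filter, mem_product, mem_Icc]
  omega

section bG

variable {N : ℕ} {E : Finset (ℕ × ℕ)} {i j : ℕ}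

lemma le_bG (hi : 1 ≤ i) : i ≤ bG E i := by
  rw [bG, if_neg (by omega)]
  exact le_max_left _ _

lemma bG_le (hE : E ⊆ ENfin N) (hi : 1 ≤ i) (hiN : i ≤ N) : bG E i ≤ N := by
  rw [bG, if_neg (by omega)]
  exact max_le hiN <| Finset.sup_le fun e he =>
    (mem_ENfin_iff.1 (hE (mem_filter.1 he).1)).2.2

lemma le_bG_iff (hE : IsDCGraph N E) (hi : 1 ≤ i) (hij : i < j) :
    j ≤ bG E i ↔ (i, j) ∈ E := by
  rw [bG, if_neg (by omega), le_max_iff, or_iff_right (by omega),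
    Finset.le_sup_iff (by rw [Nat.bot_eq_zero]; omega)]
  constructor
  · rintro ⟨e, he, hje⟩
    obtain ⟨heE, rfl⟩ := mem_filter.1 he
    exact hE.2 e heE (e.1, j) ⟨le_rfl, hij, hje⟩
  · exact fun h => ⟨(i, j), mem_filter.2 ⟨h, rfl⟩, le_rfl⟩

end bG

def StrictlyRealizes (N : ℕ) (E : Finset (ℕ × ℕ)) (s : ℕ → ℝ) : Prop :=
  0 < s 1 ∧ ∀ e ∈ ENfin N, s e.1 < s e.2 ∧ (e ∈ E → s e.2 - s e.1 < s 1) ∧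
    (e ∉ E → s 1 < s e.2 - s e.1)

namespace StrictlyRealizes

variable {N : ℕ} {E : Finset (ℕ × ℕ)} {s : ℕ → ℝ}

lemma le (h : StrictlyRealizes N E s) {i j : ℕ} (hi : 1 ≤ i) (hij : i ≤ j) (hj : j ≤ N) :
    s i ≤ s j := by
  rcases hij.eq_or_lt with rfl | hlt
  · exact le_rfl
  · exact (h.2 (i, j) (mem_ENfin_iff.2 ⟨hi, hlt, hj⟩)).1.le

lemma congr (h : StrictlyRealizes N E s) (hN : 1 ≤ N) {s' : ℕ → ℝ}
    (hs : ∀ m ∈ Icc 1 N, s m = s' m) : StrictlyRealizes N E s' := by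
  have hs' : ∀ m, 1 ≤ m → m ≤ N → s' m = s m := fun m h1 h2 => (hs m (mem_Icc.2 ⟨h1, h2⟩)).symm
  refine ⟨by rw [hs' 1 le_rfl hN]; exact h.1, fun e he => ?_⟩
  obtain ⟨h1, h12, h2⟩ := mem_ENfin_iff.1 he
  rw [hs' 1 le_rfl hN, hs' e.1 h1 (by omega), hs' e.2 (by omega) h2]
  exact h.2 e he

lemma eventually {X : Type*} [TopologicalSpace X] {s : X → ℕ → ℝ} {x₀ : X} (hN : 1 ≤ N)
    (hs : ∀ m ∈ Icc 1 N, ContinuousAt (fun x => s x m) x₀) (h : StrictlyRealizes N E (s x₀)) :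
    ∀ᶠ x in 𝓝 x₀, StrictlyRealizes N E (s x) := by
  have hs1 := hs 1 (mem_Icc.2 ⟨le_rfl, hN⟩)
  refine (continuousAt_const.eventually_lt hs1 h.1).and ((eventually_all_finset _).2 fun e he => ?_)
  obtain ⟨h1, h12, h2⟩ := mem_ENfin_iff.1 he
  have hs₁ := hs e.1 (mem_Icc.2 ⟨h1, by omega⟩)
  have hs₂ := hs e.2 (mem_Icc.2 ⟨by omega, h2⟩)
  obtain ⟨hlt, hin, hout⟩ := h.2 e he
  exact (hs₁.eventually_lt hs₂ hlt).and <|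
    (eventually_imp_distrib_left.2 fun he => (hs₂.sub hs₁).eventually_lt hs1 (hin he)).and
    (eventually_imp_distrib_left.2 fun he => hs1.eventually_lt (hs₂.sub hs₁) (hout he))

end StrictlyRealizes

section realizer

variable {N : ℕ} {E : Finset (ℕ × ℕ)} {i j : ℕ}

def leftEnd (E : Finset (ℕ × ℕ)) (j : ℕ) : ℕ :=
  Nat.find (⟨j, Or.inr rfl⟩ : ∃ i, (i, j) ∈ E ∨ i = j)

lemma leftEnd_le : leftEnd E j ≤ j :=
  Nat.find_min' _ (Or.inr rfl)

lemma leftEnd_le_of_mem (h : (i, j) ∈ E) : leftEnd E j ≤ i :=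
  Nat.find_min' _ (Or.inl h)

lemma mem_of_leftEnd_le (hE : IsDCGraph N E) (hL : leftEnd E j ≤ i) (hij : i < j) :
    (i, j) ∈ E := by
  rcases Nat.find_spec (⟨j, Or.inr rfl⟩ : ∃ i, (i, j) ∈ E ∨ i = j) with h | h
  · exact hE.2 _ h _ ⟨hL, hij, le_rfl⟩
  · exact absurd h (by unfold leftEnd at hL; omega)

/-- If `j + 2` has an in-neighbour and `L = leftEnd E (j + 2)`, the value at `j + 2` is the
midpoint of `max (realizer E (j + 1)) (realizer E (L - 1) + 1)` and `realizer E L + 1`; the first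
is smaller because `realizer E (j + 1) < realizer E L + 1` by downward closedness. -/
noncomputable def realizer (E : Finset (ℕ × ℕ)) : ℕ → ℝ
  | 0 => 0
  | 1 => 1
  | j + 2 =>
    if h : leftEnd E (j + 2) = j + 2 then realizer E (j + 1) + 2
    else (max (realizer E (j + 1)) (realizer E (leftEnd E (j + 2) - 1) + 1) +
      realizer E (leftEnd E (j + 2)) + 1) / 2
decreasing_by all_goals have := leftEnd_le (E := E) (j := j + 2); omega

lemma realizer_one : realizer E 1 = 1 := by
  rw [realizer]

lemma realizer_add_two_bounds (hE : IsDCGraph N E) {n : ℕ}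
    (h : StrictlyRealizes (n + 1) E (realizer E)) :
    realizer E (n + 1) < realizer E (n + 2) ∧
      realizer E (leftEnd E (n + 2) - 1) + 1 < realizer E (n + 2) ∧
      (leftEnd E (n + 2) < n + 2 → realizer E (n + 2) < realizer E (leftEnd E (n + 2)) + 1) := by
  set r := realizer E
  set L := leftEnd E (n + 2)
  by_cases hL : L = n + 2
  · have hr : r (n + 2) = r (n + 1) + 2 := by
      simp only [r, realizer]
      exact dif_pos hL
    rw [hL, hr, show n + 2 - 1 = n + 1 from rfl]
    exact ⟨by linarith, by linarith, fun h => absurd h (lt_irrefl _)⟩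
  have hLlt : L < n + 2 := lt_of_le_of_ne leftEnd_le hL
  have hLE : (L, n + 2) ∈ E := mem_of_leftEnd_le hE le_rfl hLlt
  have hL1 : 1 ≤ L := (mem_ENfin_iff.1 (hE.1 hLE)).1
  have hr1 : r 1 = 1 := realizer_one
  have hprev : r (n + 1) < r L + 1 := by
    rcases (show L ≤ n + 1 by omega).eq_or_lt with hL' | hL'
    · rw [hL']; linarith
    · have hmem : (L, n + 1) ∈ E := hE.2 _ hLE _ ⟨le_rfl, hL', by omega⟩
      linarith [(h.2 (L, n + 1) (mem_ENfin_iff.2 ⟨hL1, hL', le_rfl⟩)).2.1 hmem]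
  have hbefore : r (L - 1) < r L := by
    rcases (show L = 1 ∨ 2 ≤ L by omega) with hL' | hL'
    · rw [hL', Nat.sub_self, hr1]
      simp only [r, realizer]
      exact one_pos
    · exact (h.2 (L - 1, L) (mem_ENfin_iff.2 ⟨by omega, by omega, by omega⟩)).1
  set A := max (r (n + 1)) (r (L - 1) + 1)
  have hA : A < r L + 1 := max_lt hprev (by linarith)
  have hr : r (n + 2) = (A + r L + 1) / 2 := by
    simp only [r, A, L, realizer]
    exact dif_neg hL
  refine ⟨?_, ?_, fun _ => by rw [hr]; linarith⟩
  · linarith [le_max_left (r (n + 1)) (r (L - 1) + 1)]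
  · linarith [le_max_right (r (n + 1)) (r (L - 1) + 1)]

lemma realizer_new_vertex (hE : IsDCGraph N E) {n : ℕ}
    (h : StrictlyRealizes (n + 1) E (realizer E)) (hi : 1 ≤ i) (hin : i ≤ n + 1) :
    realizer E i < realizer E (n + 2) ∧
      ((i, n + 2) ∈ E → realizer E (n + 2) - realizer E i < realizer E 1) ∧
      ((i, n + 2) ∉ E → realizer E 1 < realizer E (n + 2) - realizer E i) := by
  obtain ⟨hprev, hlow, hup⟩ := realizer_add_two_bounds hE h
  rw [realizer_one]
  refine ⟨(h.le hi hin le_rfl).trans_lt hprev, fun hmem => ?_, fun hmem => ?_⟩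
  · have hLi := leftEnd_le_of_mem hmem
    have hLlt : leftEnd E (n + 2) < n + 2 := by omega
    have hL1 := (mem_ENfin_iff.1 (hE.1 (mem_of_leftEnd_le hE le_rfl hLlt))).1
    linarith [hup hLlt, h.le hL1 hLi hin]
  · have hiL : i ≤ leftEnd E (n + 2) - 1 := by
      by_contra hlt
      exact hmem (mem_of_leftEnd_le hE (by omega) (by omega))
    linarith [h.le hi hiL (by have := leftEnd_le (E := E) (j := n + 2); omega)]

lemma realizer_strictlyRealizes (hE : IsDCGraph N E) (m : ℕ) :
    StrictlyRealizes m E (realizer E) := by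
  induction m with
  | zero => exact ⟨by rw [realizer_one]; exact one_pos, fun e he => by
      have := mem_ENfin_iff.1 he; omega⟩
  | succ m ih =>
    refine ⟨ih.1, fun ⟨i, j⟩ he => ?_⟩
    obtain ⟨h1, h12, h2⟩ : 1 ≤ i ∧ i < j ∧ j ≤ m + 1 := mem_ENfin_iff.1 he
    rcases h2.lt_or_eq with h2 | rfl
    · exact ih.2 (i, j) (mem_ENfin_iff.2 ⟨h1, h12, by omega⟩)
    · obtain ⟨n, rfl⟩ : ∃ n, m = n + 1 := ⟨m - 1, by omega⟩
      exact realizer_new_vertex hE ih h1 (by omega)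

end realizer

section linearSystem

/-- `a i = stationaryMap E p s i` is the system `S^G (a, p)` of `SolvesS`, written in the
coordinates `s i = ζ 1 + ... + ζ i` instead of the increments `ζ`. -/
def stationaryMap (E : Finset (ℕ × ℕ)) (p : ℕ → ℝ) : (ℕ → ℝ) →ₗ[ℝ] ℕ → ℝ :=
  let π : ℕ → (ℕ → ℝ) →ₗ[ℝ] ℝ := LinearMap.proj
  LinearMap.pi fun i => ∑ j ∈ Icc 1 (bG E i), p j • (π i - π j + π 1)

@[simp]
lemma stationaryMap_apply (E : Finset (ℕ × ℕ)) (p s : ℕ → ℝ) (i : ℕ) :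
    stationaryMap E p s i = ∑ j ∈ Icc 1 (bG E i), p j * (s i - s j + s 1) := by
  simp [stationaryMap, mul_add]

variable {N : ℕ} {E : Finset (ℕ × ℕ)} {a p s : ℕ → ℝ}

lemma stationaryMap_eq_sum_pos' (hE : IsDCGraph N E) (hs : StrictlyRealizes N E s) {i : ℕ}
    (hi : i ∈ Icc 1 N) :
    stationaryMap E p s i = ∑ j ∈ Icc 1 N, p j * pos' (s i - s j + s 1) := by
  rw [mem_Icc] at hi
  have hbG := bG_le hE.1 hi.1 hi.2
  rw [stationaryMap_apply, ← sum_subset (Icc_subset_Icc_right hbG)]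
  · refine sum_congr rfl fun j hj => ?_
    rw [mem_Icc] at hj
    have hpos : 0 < s i - s j + s 1 := by
      rcases le_or_gt j i with hji | hij
      · linarith [hs.1, hs.le hj.1 hji hi.2]
      · have hedge := (le_bG_iff hE hi.1 hij).1 hj.2
        linarith [(hs.2 (i, j) (mem_ENfin_iff.2 ⟨hi.1, hij, hj.2.trans hbG⟩)).2.1 hedge]
    rw [pos', max_eq_left hpos.le]
  · intro j hj hj'
    rw [mem_Icc] at hj hj'
    have hij : i < bG E i + 1 := Nat.lt_succ_of_le (le_bG hi.1)
    have hnot : (i, j) ∉ E := fun h => hj' ⟨hj.1, (le_bG_iff hE hi.1 (by omega)).2 h⟩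
    have hneg := (hs.2 (i, j) (mem_ENfin_iff.2 ⟨hi.1, by omega, hj.2⟩)).2.2 hnot
    rw [pos', max_eq_right (by linarith), mul_zero]

lemma isParam_of_strictlyRealizes (hN : 1 ≤ N) (hp : ∀ j ∈ Icc 1 N, 0 < p j)
    (hs : StrictlyRealizes N E s)
    (ha : ∀ i ∈ Icc 1 N, a i = ∑ j ∈ Icc 1 N, p j * pos' (s i - s j + s 1)) :
    IsParam N a p := by
  have h1N : 1 ∈ Icc 1 N := mem_Icc.2 ⟨le_rfl, hN⟩
  have hterm : ∀ i, 1 ≤ i → i ≤ N → pos' (s i - s 1 + s 1) = s i := fun i h1 h2 => by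
    rw [sub_add_cancel, pos', max_eq_left (hs.1.trans_le (hs.le le_rfl h1 h2)).le]
  refine ⟨?_, fun i h1 h2 => ?_, fun i h1 h2 => hp i (mem_Icc.2 ⟨h1, h2⟩)⟩
  · rw [ha 1 h1N]
    refine sum_pos' (fun j hj => mul_nonneg (hp j hj).le (le_max_right _ _)) ⟨1, h1N, ?_⟩
    rw [hterm 1 le_rfl hN]
    exact mul_pos (hp 1 h1N) hs.1
  · have hlt := (hs.2 (i, i + 1) (mem_ENfin_iff.2 ⟨h1, by omega, by omega⟩)).1
    rw [ha i (mem_Icc.2 ⟨h1, h2.le⟩), ha (i + 1) (mem_Icc.2 ⟨by omega, h2⟩)]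
    refine sum_lt_sum (fun j hj => ?_) ⟨1, h1N, ?_⟩
    · exact mul_le_mul_of_nonneg_left (max_le_max_right _ (by linarith)) (hp j hj).le
    · rw [hterm i h1 h2.le, hterm (i + 1) (by omega) h2]
      exact mul_lt_mul_of_pos_left hlt (hp 1 h1N)

lemma mem_PGset_of_strictlyRealizes (hN : 1 ≤ N) (hE : IsDCGraph N E)
    (hp : ∀ j ∈ Icc 1 N, 0 < p j) (hs : StrictlyRealizes N E s)
    (ha : ∀ i ∈ Icc 1 N, stationaryMap E p s i = a i) : (a, p) ∈ PGset N E := by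
  have hstat : ∀ i ∈ Icc 1 N, a i = ∑ j ∈ Icc 1 N, p j * pos' (s i - s j + s 1) :=
    fun i hi => by rw [← ha i hi, stationaryMap_eq_sum_pos' hE hs hi]
  refine ⟨isParam_of_strictlyRealizes hN hp hs hstat, s, ⟨hs.1, fun i h1 h2 =>
    (hs.2 (i, i + 1) (mem_ENfin_iff.2 ⟨h1, by omega, by omega⟩)).1,
    fun i h1 h2 => hstat i (mem_Icc.2 ⟨h1, h2⟩)⟩, ?_⟩
  ext e
  simp only [GrEdges, mem_filter]
  refine ⟨fun ⟨he, hlt⟩ => ?_, fun he => ⟨hE.1 he, (hs.2 e (hE.1 he)).2.1 he⟩⟩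
  by_contra hne
  linarith [(hs.2 e he).2.2 hne]

lemma p_one_le_qq_bG (hE : E ⊆ ENfin N) (hp : ∀ j ∈ Icc 1 N, 0 < p j) {i : ℕ}
    (hi : i ∈ Icc 1 N) : p 1 ≤ qq p (bG E i) := by
  rw [mem_Icc] at hi
  exact single_le_sum (fun j hj => (hp j (Icc_subset_Icc_right (bG_le hE hi.1 hi.2) hj)).le)
    (mem_Icc.2 ⟨le_rfl, hi.1.trans (le_bG hi.1)⟩)

lemma le_stationaryMap_of_forall_le (hE : E ⊆ ENfin N) (hp : ∀ j ∈ Icc 1 N, 0 < p j) {i : ℕ}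
    (hi : i ∈ Icc 1 N) (hmax : ∀ j ∈ Icc 1 N, s j ≤ s i) :
    qq p (bG E i) * s 1 + p 1 * (s i - s 1) ≤ stationaryMap E p s i := by
  rw [mem_Icc] at hi
  have hbG := bG_le hE hi.1 hi.2
  have hsub : Icc 1 (bG E i) ⊆ Icc 1 N := Icc_subset_Icc_right hbG
  calc qq p (bG E i) * s 1 + p 1 * (s i - s 1)
      ≤ qq p (bG E i) * s 1 + ∑ j ∈ Icc 1 (bG E i), p j * (s i - s j) := by
        gcongr
        exact single_le_sum (f := fun j => p j * (s i - s j))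
          (fun j hj => mul_nonneg (hp j (hsub hj)).le (sub_nonneg.2 (hmax j (hsub hj))))
          (mem_Icc.2 ⟨le_rfl, hi.1.trans (le_bG hi.1)⟩)
    _ = stationaryMap E p s i := by
        rw [stationaryMap_apply, qq, sum_mul, ← sum_add_distrib]
        exact sum_congr rfl fun j _ => by ring

lemma eq_zero_of_stationaryMap_eq_zero (hE : E ⊆ ENfin N) (hp : ∀ j ∈ Icc 1 N, 0 < p j)
    (h : ∀ i ∈ Icc 1 N, stationaryMap E p s i = 0) : ∀ k ∈ Icc 1 N, s k = 0 := by
  intro k hk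
  have h1N : 1 ∈ Icc 1 N := mem_Icc.2 ⟨le_rfl, (mem_Icc.1 hk).1.trans (mem_Icc.1 hk).2⟩
  obtain ⟨M, hM, hMmax⟩ := exists_max_image (Icc 1 N) s ⟨k, hk⟩
  obtain ⟨m, hm, hmmin⟩ := exists_min_image (Icc 1 N) s ⟨k, hk⟩
  have hqM := p_one_le_qq_bG hE hp hM
  have hqm := p_one_le_qq_bG hE hp hm
  have hp1 := hp 1 h1N
  have hM' := le_stationaryMap_of_forall_le hE hp hM hMmax
  have hm' := le_stationaryMap_of_forall_le hE hp (s := -s) hm fun j hj => neg_le_neg (hmmin j hj)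
  rw [h M hM] at hM'
  simp only [map_neg, Pi.neg_apply, h m hm, neg_zero] at hm'
  have h1M := hMmax 1 h1N
  have h1m := hmmin 1 h1N
  -- the maximum principle at a maximiser of `s` gives `s 1 ≤ 0`, at a minimiser `s 1 ≥ 0`
  have hs1 : s 1 = 0 := by nlinarith
  nlinarith [hMmax k hk, hmmin k hk]

noncomputable def stationaryMatrix (N : ℕ) (E : Finset (ℕ × ℕ)) (p : ℕ → ℝ) :
    Matrix (Icc 1 N) (Icc 1 N) ℝ :=
  LinearMap.toMatrix' (LinearMap.funLeft ℝ ℝ Subtype.val ∘ₗ stationaryMap E p ∘ₗ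
    Function.ExtendByZero.linearMap ℝ Subtype.val)

lemma stationaryMatrix_mulVec (v : Icc 1 N → ℝ) (i : Icc 1 N) :
    (stationaryMatrix N E p *ᵥ v) i = stationaryMap E p (Function.extend Subtype.val v 0) i := by
  rw [stationaryMatrix, LinearMap.toMatrix'_mulVec]
  rfl

lemma det_stationaryMatrix_ne_zero (hE : E ⊆ ENfin N) (hp : ∀ j ∈ Icc 1 N, 0 < p j) :
    (stationaryMatrix N E p).det ≠ 0 := by
  intro h0
  obtain ⟨v, hv, hMv⟩ := exists_mulVec_eq_zero_iff.2 h0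
  have hext := eq_zero_of_stationaryMap_eq_zero hE hp (s := Function.extend Subtype.val v 0)
    fun i hi => by rw [← stationaryMatrix_mulVec _ ⟨i, hi⟩, hMv, Pi.zero_apply]
  exact hv (funext fun k => by simpa [Subtype.val_injective.extend_apply] using hext k k.2)

lemma continuous_stationaryMatrix : Continuous fun p => stationaryMatrix N E p :=
  continuous_matrix fun i k => by
    simp only [stationaryMatrix, LinearMap.toMatrix'_apply, LinearMap.comp_apply,
      LinearMap.funLeft_apply, stationaryMap_apply]
    fun_prop

noncomputable def stationarySolution (N : ℕ) (E : Finset (ℕ × ℕ)) (a p : ℕ → ℝ) : ℕ → ℝ :=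
  Function.extend Subtype.val ((stationaryMatrix N E p)⁻¹ *ᵥ fun i : Icc 1 N => a i) 0

lemma stationaryMap_stationarySolution (hE : E ⊆ ENfin N) (hp : ∀ j ∈ Icc 1 N, 0 < p j) {i : ℕ}
    (hi : i ∈ Icc 1 N) : stationaryMap E p (stationarySolution N E a p) i = a i := by
  rw [stationarySolution, ← stationaryMatrix_mulVec _ ⟨i, hi⟩, mulVec_mulVec,
    mul_nonsing_inv _ (isUnit_iff_ne_zero.2 (det_stationaryMatrix_ne_zero hE hp)), one_mulVec]

lemma stationarySolution_eq (hE : E ⊆ ENfin N) (hp : ∀ j ∈ Icc 1 N, 0 < p j)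
    (hs : ∀ i ∈ Icc 1 N, stationaryMap E p s i = a i) :
    ∀ m ∈ Icc 1 N, stationarySolution N E a p m = s m := by
  have hdiff : ∀ i ∈ Icc 1 N, stationaryMap E p (stationarySolution N E a p - s) i = 0 :=
    fun i hi => by
      rw [map_sub, Pi.sub_apply, stationaryMap_stationarySolution hE hp hi, hs i hi, sub_self]
  exact fun m hm => sub_eq_zero.1 (eq_zero_of_stationaryMap_eq_zero hE hp hdiff m hm)

lemma continuousAt_stationarySolution (hE : E ⊆ ENfin N) (hp : ∀ j ∈ Icc 1 N, 0 < p j) {m : ℕ}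
    (hm : m ∈ Icc 1 N) :
    ContinuousAt (fun x : (ℕ → ℝ) × (ℕ → ℝ) => stationarySolution N E x.1 x.2 m) (a, p) := by
  have hcoord : ∀ x : (ℕ → ℝ) × (ℕ → ℝ), stationarySolution N E x.1 x.2 m =
      ((stationaryMatrix N E x.2)⁻¹ *ᵥ fun i : Icc 1 N => x.1 i) ⟨m, hm⟩ :=
    fun x => Subtype.val_injective.extend_apply _ _ (⟨m, hm⟩ : Icc 1 N)
  simp only [hcoord]
  have hinv : ContinuousAt (fun x : (ℕ → ℝ) × (ℕ → ℝ) => (stationaryMatrix N E x.2)⁻¹) (a, p) :=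
    (continuousAt_matrix_inv _ (by
      rw [Ring.inverse_eq_inv']; exact continuousAt_inv₀ (det_stationaryMatrix_ne_zero hE hp))).comp
      (continuous_stationaryMatrix.comp continuous_snd).continuousAt
  have hvec : Continuous fun x : (ℕ → ℝ) × (ℕ → ℝ) => fun i : Icc 1 N => x.1 i := by fun_prop
  exact (continuous_apply _).continuousAt.comp <|
    (continuous_fst.matrix_mulVec continuous_snd).continuousAt.comp (hinv.prodMk hvec.continuousAt)

end linearSystem

/-- each region `P_G` has non-empty interior, Theorem 4.8. -/
theorem stmt_14 (N : ℕ) (hN : 1 ≤ N) (E : Finset (ℕ × ℕ)) (hE : IsDCGraph N E) :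
    (interior (PGset N E)).Nonempty := by
  set a₀ := stationaryMap E 1 (realizer E)
  have hp₀ : ∀ j ∈ Icc 1 N, (0 : ℝ) < (1 : ℕ → ℝ) j := fun _ _ => one_pos
  have hs₀ : StrictlyRealizes N E (stationarySolution N E a₀ 1) :=
    (realizer_strictlyRealizes hE N).congr hN fun m hm =>
      (stationarySolution_eq hE.1 hp₀ (fun _ _ => rfl) m hm).symm
  have hev : ∀ᶠ x : (ℕ → ℝ) × (ℕ → ℝ) in 𝓝 (a₀, 1),
      (∀ j ∈ Icc 1 N, 0 < x.2 j) ∧ StrictlyRealizes N E (stationarySolution N E x.1 x.2) :=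
    ((eventually_all_finset _).2 fun j _ => continuousAt_const.eventually_lt
        ((continuous_apply j).comp continuous_snd).continuousAt one_pos).and
      (StrictlyRealizes.eventually hN (fun m hm => continuousAt_stationarySolution hE.1 hp₀ hm) hs₀)
  refine ⟨(a₀, 1), mem_interior_iff_mem_nhds.2 (hev.mono fun x ⟨hp, hs⟩ => ?_)⟩
  exact mem_PGset_of_strictlyRealizes hN hE hp hs fun i hi =>
    stationaryMap_stationarySolution hE.1 hp hi
end

section
/- The map from P^{2N} to ℝ^N sending (a,p) to its unique stationary tuple s(a,p) is continuous on P^{2N}; consequently, for every i ∈ {1,...,N}, the map (a,p) ↦ z_i(a,p) := s_i(a,p) − s_{i−1}(a,p) (with s_0(a,p) := 0) is continuous on P^{2N}. -/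
open Filter Topology
open scoped Classical

noncomputable section

/-! Stationarity is characterised, on `P^{2N}`, by a closed condition (`IsWeakStationaryTuple`),
and by a maximum principle it has at most one solution. Since `s_i ≤ a_i / p_1`, the stationary
tuple stays in a compact box near every parameter, so every cluster point of `s` at `(a₀, p₀)` is
a stationary tuple for `(a₀, p₀)`, hence equal to `s(a₀, p₀)`: this is continuity. -/

lemma le_pos' (x : ℝ) : x ≤ pos' x := le_max_left _ _

lemma pos'_of_nonneg {x : ℝ} (h : 0 ≤ x) : pos' x = x := max_eq_left h

lemma pos'_mono : Monotone pos' := fun _ _ h => max_le_max h le_rfl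

lemma pos'_sub_pos'_le {x y : ℝ} (h : x ≤ y) : pos' y - pos' x ≤ y - x :=
  (le_abs_self _).trans ((abs_max_sub_max_le_abs y x 0).trans (abs_of_nonneg (sub_nonneg.2 h)).le)

@[fun_prop]
lemma continuous_pos' : Continuous pos' := continuous_id.max continuous_const

theorem tendsto_nhdsSet_fiber_of_isCompact_of_isClosed {X Y : Type*} [TopologicalSpace X]
    [TopologicalSpace Y] {l : Filter X} {x₀ : X} (hl : l ≤ 𝓝 x₀) {f : X → Y} {K : Set Y}
    (hK : IsCompact K) (hfK : ∀ᶠ x in l, f x ∈ K) {C : Set (X × Y)} (hC : IsClosed C)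
    (hfC : ∀ᶠ x in l, (x, f x) ∈ C) :
    Tendsto f l (𝓝ˢ {y ∈ K | (x₀, y) ∈ C}) := by
  refine hK.tendsto_nhdsSet_of_mapClusterPt hfK fun y hyK hy => ⟨hyK, hC.mem_of_mapClusterPt ?_ hfC⟩
  rw [((𝓝 x₀).basis_sets.prod_nhds (𝓝 y).basis_sets).mapClusterPt_iff_frequently]
  rintro ⟨U, V⟩ ⟨hU, hV⟩
  exact ((mapClusterPt_iff_frequently.1 hy V hV).and_eventually (hl hU)).mono
    fun x hx => ⟨hx.2, hx.1⟩

section StationaryTuple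

variable {N : ℕ} {a p s s' : ℕ → ℝ}

lemma qq_nonneg (hp : ∀ j, 1 ≤ j → j ≤ N → 0 ≤ p j) : 0 ≤ qq p N :=
  Finset.sum_nonneg fun j hj => hp j (Finset.mem_Icc.1 hj).1 (Finset.mem_Icc.1 hj).2

namespace IsStationaryTuple

lemma apply_one_le (hs : IsStationaryTuple N a p s) {j : ℕ} (hj : j ∈ Set.Icc 1 N) : s 1 ≤ s j := by
  obtain ⟨hj1, hjN⟩ := hj
  induction j, hj1 using Nat.le_induction with
  | base => exact le_rfl
  | succ k hk ih => exact (ih (by omega)).trans (hs.2.1 k hk (by omega)).le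

lemma mul_apply_le (hs : IsStationaryTuple N a p s) (hp : ∀ j, 1 ≤ j → j ≤ N → 0 ≤ p j) {i : ℕ}
    (hi : i ∈ Set.Icc 1 N) : p 1 * s i ≤ a i := by
  have hN : 1 ≤ N := hi.1.trans hi.2
  calc p 1 * s i ≤ p 1 * pos' (s i - s 1 + s 1) := by
        rw [sub_add_cancel]; exact mul_le_mul_of_nonneg_left (le_pos' _) (hp 1 le_rfl hN)
    _ ≤ ∑ j ∈ Finset.Icc 1 N, p j * pos' (s i - s j + s 1) :=
        Finset.single_le_sum (f := fun j => p j * pos' (s i - s j + s 1))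
          (fun j hj => mul_nonneg (hp j (Finset.mem_Icc.1 hj).1 (Finset.mem_Icc.1 hj).2)
            (le_max_right _ _)) (Finset.mem_Icc.2 ⟨le_rfl, hN⟩)
    _ = a i := (hs.2.2 i hi.1 hi.2).symm

/-- Maximum principle: where `s' - s` is maximal and positive, each term of the equation for `s'`
dominates the corresponding one for `s`, and the term `j = 1` strictly. -/
theorem le_of_le (hs : IsStationaryTuple N a p s) (hs' : IsStationaryTuple N a p s')
    (hp : ∀ j, 1 ≤ j → j ≤ N → 0 < p j) (h1 : s 1 ≤ s' 1) {i : ℕ} (hi : i ∈ Set.Icc 1 N) :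
    s' i ≤ s i := by
  by_contra! hlt
  obtain ⟨m, hm, hmax⟩ := Finset.exists_max_image (Finset.Icc 1 N) (fun i => s' i - s i)
    ⟨i, Finset.mem_Icc.2 hi⟩
  obtain ⟨hm1, hmN⟩ := Finset.mem_Icc.1 hm
  have hpos : s m < s' m := by linarith [hmax i (Finset.mem_Icc.2 hi)]
  have key : ∑ j ∈ Finset.Icc 1 N, p j * pos' (s m - s j + s 1) <
      ∑ j ∈ Finset.Icc 1 N, p j * pos' (s' m - s' j + s' 1) := by
    refine Finset.sum_lt_sum (fun j hj => ?_) ⟨1, Finset.mem_Icc.2 ⟨le_rfl, hm1.trans hmN⟩, ?_⟩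
    · have := hmax j hj
      exact mul_le_mul_of_nonneg_left (pos'_mono (by linarith))
        (hp j (Finset.mem_Icc.1 hj).1 (Finset.mem_Icc.1 hj).2).le
    · have hsm : 0 ≤ s m := (hs.1.trans_le (hs.apply_one_le ⟨hm1, hmN⟩)).le
      simp only [sub_add_cancel, pos'_of_nonneg hsm, pos'_of_nonneg (hsm.trans hpos.le)]
      exact mul_lt_mul_of_pos_left hpos (hp 1 le_rfl (hm1.trans hmN))
  rw [← hs.2.2 m hm1 hmN, ← hs'.2.2 m hm1 hmN] at key
  exact key.false

theorem eqOn (hs : IsStationaryTuple N a p s) (hs' : IsStationaryTuple N a p s')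
    (hp : ∀ j, 1 ≤ j → j ≤ N → 0 < p j) : Set.EqOn s s' (Set.Icc 1 N) := by
  intro i hi
  have h1N : (1 : ℕ) ∈ Set.Icc 1 N := ⟨le_rfl, hi.1.trans hi.2⟩
  rcases le_total (s 1) (s' 1) with h1 | h1
  · have h1' := le_antisymm h1 (hs.le_of_le hs' hp h1 h1N)
    exact le_antisymm (hs'.le_of_le hs hp h1'.ge hi) (hs.le_of_le hs' hp h1 hi)
  · have h1' := le_antisymm h1 (hs'.le_of_le hs hp h1 h1N)
    exact le_antisymm (hs'.le_of_le hs hp h1 hi) (hs.le_of_le hs' hp h1'.ge hi)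

end IsStationaryTuple

/-- A closed relaxation of stationarity, equivalent to it on `P^{2N}`: the open conditions
`0 < s 1 < ... < s N` are replaced by bounds that every stationary tuple satisfies. -/
def IsWeakStationaryTuple (N : ℕ) (a p s : ℕ → ℝ) : Prop :=
  a 1 ≤ qq p N * s 1 ∧ (∀ i, 1 ≤ i → i < N → a (i + 1) - a i ≤ qq p N * (s (i + 1) - s i)) ∧
  ∀ i, 1 ≤ i → i ≤ N → a i = ∑ j ∈ Finset.Icc 1 N, p j * pos' (s i - s j + s 1)

theorem IsStationaryTuple.isWeakStationaryTuple (hs : IsStationaryTuple N a p s) (hN : 1 ≤ N)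
    (hp : ∀ j, 1 ≤ j → j ≤ N → 0 ≤ p j) : IsWeakStationaryTuple N a p s := by
  refine ⟨?_, fun i hi1 hiN => ?_, hs.2.2⟩
  · rw [hs.2.2 1 le_rfl hN, qq, Finset.sum_mul]
    refine Finset.sum_le_sum fun j hj => mul_le_mul_of_nonneg_left ?_
      (hp j (Finset.mem_Icc.1 hj).1 (Finset.mem_Icc.1 hj).2)
    have := hs.apply_one_le (Finset.mem_Icc.1 hj)
    calc pos' (s 1 - s j + s 1) ≤ pos' (s 1) := pos'_mono (by linarith)
      _ = s 1 := pos'_of_nonneg hs.1.le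
  · have hsucc := (hs.2.1 i hi1 hiN).le
    rw [hs.2.2 i hi1 hiN.le, hs.2.2 (i + 1) (by omega) hiN, ← Finset.sum_sub_distrib, qq,
      Finset.sum_mul]
    refine Finset.sum_le_sum fun j hj => ?_
    rw [← mul_sub]
    refine mul_le_mul_of_nonneg_left ?_ (hp j (Finset.mem_Icc.1 hj).1 (Finset.mem_Icc.1 hj).2)
    linarith [pos'_sub_pos'_le (x := s i - s j + s 1) (y := s (i + 1) - s j + s 1) (by linarith)]

theorem IsWeakStationaryTuple.congr (hs : IsWeakStationaryTuple N a p s) (hN : 1 ≤ N)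
    (h : Set.EqOn s s' (Set.Icc 1 N)) : IsWeakStationaryTuple N a p s' := by
  obtain ⟨h1, hgap, heq⟩ := hs
  refine ⟨?_, fun i hi1 hiN => ?_, fun i hi1 hiN => ?_⟩
  · rwa [← h ⟨le_rfl, hN⟩]
  · rw [← h ⟨hi1, hiN.le⟩, ← h ⟨by omega, hiN⟩]; exact hgap i hi1 hiN
  · rw [heq i hi1 hiN]
    refine Finset.sum_congr rfl fun j hj => ?_
    rw [h ⟨hi1, hiN⟩, h (Finset.mem_Icc.1 hj), h ⟨le_rfl, hi1.trans hiN⟩]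

theorem IsWeakStationaryTuple.isStationaryTuple (hs : IsWeakStationaryTuple N a p s)
    (hap : IsParam N a p) : IsStationaryTuple N a p s := by
  have hq := qq_nonneg fun j hj1 hjN => (hap.2.2 j hj1 hjN).le
  refine ⟨pos_of_mul_pos_right (hap.1.trans_le hs.1) hq, fun i hi1 hiN => ?_, hs.2.2⟩
  have := pos_of_mul_pos_right ((sub_pos.2 (hap.2.1 i hi1 hiN)).trans_le (hs.2.1 i hi1 hiN)) hq
  linarith

theorem isClosed_setOf_isWeakStationaryTuple (N : ℕ) :
    IsClosed {x : ((ℕ → ℝ) × (ℕ → ℝ)) × (ℕ → ℝ) | IsWeakStationaryTuple N x.1.1 x.1.2 x.2} := by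
  simp only [IsWeakStationaryTuple, qq, Set.ofPred_and, Set.ofPred_forall]
  refine (isClosed_le (by fun_prop) (by fun_prop)).inter
    ((isClosed_iInter fun i => isClosed_iInter fun _ => isClosed_iInter fun _ => ?_).inter
      (isClosed_iInter fun i => isClosed_iInter fun _ => isClosed_iInter fun _ => ?_))
  · exact isClosed_le (by fun_prop) (by fun_prop)
  · exact isClosed_eq (by fun_prop) (by fun_prop)

variable {S : ((ℕ → ℝ) × (ℕ → ℝ)) → ℕ → ℝ} {ap₀ : (ℕ → ℝ) × (ℕ → ℝ)}

/-- Truncating to the indices `1, ..., N` puts the tuple in a compact box of `ℕ → ℝ`; the bound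
comes from `p 1 * s i ≤ a i`. -/
theorem eventually_indicator_mem_pi_Icc (hS : ∀ ap ∈ Pset N, IsStationaryTuple N ap.1 ap.2 (S ap))
    (h₀ : ap₀ ∈ Pset N) (hN : 1 ≤ N) :
    ∀ᶠ ap in 𝓝[Pset N] ap₀, (Set.Icc 1 N).indicator (S ap) ∈
      Set.univ.pi fun j => Set.Icc 0 (|ap₀.1 j / ap₀.2 1| + 1) := by
  have hbound : ∀ᶠ ap in 𝓝[Pset N] ap₀,
      ∀ j ∈ Finset.Icc 1 N, ap.1 j / ap.2 1 < |ap₀.1 j / ap₀.2 1| + 1 := by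
    refine (eventually_all_finset _).2 fun j _ => ?_
    have : ContinuousAt (fun ap : (ℕ → ℝ) × (ℕ → ℝ) => ap.1 j / ap.2 1) ap₀ :=
      by fun_prop (disch := exact (h₀.2.2 1 le_rfl hN).ne')
    exact (this.tendsto.mono_left nhdsWithin_le_nhds).eventually_lt_const
      (by linarith [le_abs_self (ap₀.1 j / ap₀.2 1)])
  filter_upwards [hbound, self_mem_nhdsWithin] with ap hap hP j _
  by_cases hj : j ∈ Set.Icc 1 N
  · have hs := hS ap hP
    rw [Set.indicator_of_mem hj]
    refine ⟨(hs.1.trans_le (hs.apply_one_le hj)).le, ?_⟩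
    have := hs.mul_apply_le (fun j h1 h2 => (hP.2.2 j h1 h2).le) hj
    exact ((le_div_iff₀' (hP.2.2 1 le_rfl hN)).2 this).trans (hap j (Finset.mem_Icc.2 hj)).le
  · rw [Set.indicator_of_notMem hj]
    exact ⟨le_rfl, by positivity⟩

theorem continuousWithinAt_stationaryTuple
    (hS : ∀ ap ∈ Pset N, IsStationaryTuple N ap.1 ap.2 (S ap)) (h₀ : ap₀ ∈ Pset N) {i : ℕ}
    (hi : i ∈ Set.Icc 1 N) : ContinuousWithinAt (fun ap => S ap i) (Pset N) ap₀ := by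
  have hN : 1 ≤ N := hi.1.trans hi.2
  have hC : ∀ᶠ ap in 𝓝[Pset N] ap₀, (ap, (Set.Icc 1 N).indicator (S ap)) ∈
      {x : ((ℕ → ℝ) × (ℕ → ℝ)) × (ℕ → ℝ) | IsWeakStationaryTuple N x.1.1 x.1.2 x.2} := by
    filter_upwards [self_mem_nhdsWithin] with ap hP
    exact ((hS ap hP).isWeakStationaryTuple hN fun j h1 h2 => (hP.2.2 j h1 h2).le).congr hN
      Set.eqOn_indicator.symm
  have hlim := tendsto_nhdsSet_fiber_of_isCompact_of_isClosed nhdsWithin_le_nhds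
    (isCompact_univ_pi fun j => isCompact_Icc) (eventually_indicator_mem_pi_Icc hS h₀ hN)
    (isClosed_setOf_isWeakStationaryTuple N) hC
  have hfiber : Tendsto (fun y : ℕ → ℝ => y i)
      (𝓝ˢ {y ∈ Set.univ.pi fun j => Set.Icc 0 (|ap₀.1 j / ap₀.2 1| + 1) |
        IsWeakStationaryTuple N ap₀.1 ap₀.2 y}) (𝓝 (S ap₀ i)) :=
    (continuous_apply i).tendsto_nhdsSet_nhds
      fun y hy => (hy.2.isStationaryTuple h₀).eqOn (hS ap₀ h₀) h₀.2.2 hi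
  refine (hfiber.comp hlim).congr fun ap => ?_
  simp [Set.indicator_of_mem hi]

end StationaryTuple

theorem stmt_17_general (N : ℕ)
    (S : ((ℕ → ℝ) × (ℕ → ℝ)) → ℕ → ℝ)
    (hS : ∀ ap ∈ Pset N, IsStationaryTuple N ap.1 ap.2 (S ap)) :
    ∀ i, 1 ≤ i → i ≤ N →
      ContinuousOn (fun ap => S ap i) (Pset N) ∧
      ContinuousOn (fun ap => S ap i - (if i = 1 then 0 else S ap (i - 1))) (Pset N) := by
  have hcont : ∀ i ∈ Set.Icc 1 N, ContinuousOn (fun ap => S ap i) (Pset N) :=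
    fun i hi _ h₀ => continuousWithinAt_stationaryTuple hS h₀ hi
  intro i hi1 hiN
  refine ⟨hcont i ⟨hi1, hiN⟩, ?_⟩
  split_ifs with h
  · exact (hcont i ⟨hi1, hiN⟩).sub continuousOn_const
  · exact (hcont i ⟨hi1, hiN⟩).sub (hcont (i - 1) ⟨by omega, by omega⟩)

/-- continuity of the stationary tuple in the parameters,
Proposition 4.7. -/
theorem stmt_17 (N : ℕ) (hN : 1 ≤ N)
    (S : ((ℕ → ℝ) × (ℕ → ℝ)) → ℕ → ℝ)
    (hS : ∀ ap ∈ Pset N, IsStationaryTuple N ap.1 ap.2 (S ap)) :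
    ∀ i, 1 ≤ i → i ≤ N →
      ContinuousOn (fun ap => S ap i) (Pset N) ∧
      ContinuousOn (fun ap => S ap i - (if i = 1 then 0 else S ap (i - 1))) (Pset N) :=
  stmt_17_general N S hS
end
end
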